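/- arXiv:2005.00301 — 10 statements merged into one kernel-verified Lean document; each statement's English description precedes it below -/
import Mathlib

section
/- Let X be an alphabet with n ≥ 2 letters and let a ≤ b ≤ c be natural numbers. The number of prefix codes (w,v,u) with |w|=a, |v|=b, |u|=c (i.e., triples of words where no word is a proper prefix of another and all three are distinct as positioned, meaning w is not a prefix of v or u, and v is not a prefix of u, and vice versa) equals n^a·(n^b − n^{b−a})·(n^c − n^{c−a} − n^{c−b}), provided this quantity is nonnegative (which holds when n^{-a}+n^{-b}+n^{-c} ≤ 1). -/
/-- A sequence of code-words `C : Fin m → List X` is a uniquely decodable code if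
every word over `X` has at most one factorization into the code-words
(factorizations being compared as sequences of indices). -/
def IsUDCode {X : Type*} {m : ℕ} (C : Fin m → List X) : Prop :=
  ∀ l₁ l₂ : List (Fin m), (l₁.map C).flatten = (l₂.map C).flatten → l₁ = l₂

/-- A sequence of code-words is a prefix code if `C i` is a prefix of `C j`
only when `i = j`. -/
def IsPrefixCode {X : Type*} {m : ℕ} (C : Fin m → List X) : Prop :=
  ∀ i j : Fin m, C i <+: C j → i = j

/-!
Choose the words one at a time, shortest first. The first word `w` is arbitrary (`n^a` choices).
The second word `v` must avoid the cylinder of words of length `b` extending `w`, which has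
`n^(b-a)` elements. The third word `u` must avoid the cylinders of length `c` over `w` and over
`v`; these are disjoint since `w` is not a prefix of `v`, so `n^(c-a) + n^(c-b)` words are excluded.
Because the words are taken in order of length, being a prefix code amounts to exactly these
three non-prefix conditions. Each subtraction removes a subset from a finite set, so the
truncated subtraction of `ℕ` computes it exactly.
-/

open Finset

namespace List

variable {X : Type*}

theorem not_prefix_of_not_prefix_of_length_le {p q : List X} (hle : p.length ≤ q.length)
    (h : ¬ p <+: q) : ¬ q <+: p := fun hqp =>
  h (hqp.eq_of_length (le_antisymm hqp.length_le hle) ▸ prefix_refl q)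

theorem isPrefixCode_three_iff {w v u : List X} (hwv : w.length ≤ v.length)
    (hvu : v.length ≤ u.length) :
    IsPrefixCode ![w, v, u] ↔ ¬ w <+: v ∧ ¬ w <+: u ∧ ¬ v <+: u := by
  refine ⟨fun h => ⟨fun hp => absurd (h 0 1 hp) (by decide),
    fun hp => absurd (h 0 2 hp) (by decide), fun hp => absurd (h 1 2 hp) (by decide)⟩, ?_⟩
  rintro ⟨hwv', hwu, hvu'⟩ i j hp
  have hvw := not_prefix_of_not_prefix_of_length_le hwv hwv'
  have huw := not_prefix_of_not_prefix_of_length_le (hwv.trans hvu) hwu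
  have huv := not_prefix_of_not_prefix_of_length_le hvu hvu'
  fin_cases i <;> fin_cases j <;> simp_all

theorem not_prefix_and_prefix_of_not_prefix {w v u : List X} (hwv : w.length ≤ v.length)
    (h : ¬ w <+: v) : ¬ (w <+: u ∧ v <+: u) := fun ⟨hwu, hvu⟩ =>
  (prefix_or_prefix_of_prefix hwu hvu).elim h (not_prefix_of_not_prefix_of_length_le hwv h)

end List

def List.Vector.prefixEquiv {X : Type*} {k : ℕ} (w : List X) (hw : w.length ≤ k) :
    {v : List.Vector X k // w <+: v.1} ≃ List.Vector X (k - w.length) where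
  toFun v := ⟨v.1.1.drop w.length, by rw [List.length_drop, v.1.2]⟩
  invFun t :=
    ⟨⟨w ++ t.1, by rw [List.length_append, t.2, Nat.add_sub_cancel' hw]⟩, t.1, rfl⟩
  left_inv v := by
    obtain ⟨s, hs⟩ := v.2
    refine Subtype.ext (Subtype.ext ?_)
    simp only [← hs, List.drop_left]
  right_inv t := by
    refine Subtype.ext ?_
    simp only [List.drop_left]

section Cylinders

variable {X : Type*} [Fintype X] [DecidableEq X] {k : ℕ}

theorem card_vector_filter_prefix (w : List X) (hw : w.length ≤ k) :
    #{v : List.Vector X k | w <+: v.1} = Fintype.card X ^ (k - w.length) := by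
  rw [← Fintype.card_subtype, Fintype.card_congr (List.Vector.prefixEquiv w hw), card_vector]

theorem card_vector_filter_not_prefix (w : List X) (hw : w.length ≤ k) :
    #{v : List.Vector X k | ¬ w <+: v.1} =
      Fintype.card X ^ k - Fintype.card X ^ (k - w.length) := by
  rw [filter_not, card_sdiff_of_subset (filter_subset _ _), card_vector_filter_prefix w hw,
    card_univ, card_vector]

theorem card_vector_filter_not_prefix_and_not_prefix {w v : List X} (hwv : w.length ≤ v.length)
    (hv : v.length ≤ k) (h : ¬ w <+: v) :
    #{u : List.Vector X k | ¬ w <+: u.1 ∧ ¬ v <+: u.1} =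
      Fintype.card X ^ k - Fintype.card X ^ (k - w.length) - Fintype.card X ^ (k - v.length) := by
  set W : Finset (List.Vector X k) := {u | w <+: u.1}
  set V : Finset (List.Vector X k) := {u | v <+: u.1}
  have hdisj : Disjoint W V := disjoint_filter.2 fun u _ hwu hvu =>
    List.not_prefix_and_prefix_of_not_prefix hwv h ⟨hwu, hvu⟩
  have hcompl :
      ({u | ¬ w <+: u.1 ∧ ¬ v <+: u.1} : Finset (List.Vector X k)) = univ \ (W ∪ V) := by
    ext u
    simp [W, V, not_or]
  rw [hcompl, card_sdiff_of_subset (subset_univ _), card_union_of_disjoint hdisj,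
    card_vector_filter_prefix w (hwv.trans hv), card_vector_filter_prefix v hv, card_univ,
    card_vector, Nat.sub_sub]

theorem card_vector_filter_not_prefix_triple {a b c : ℕ} (hab : a ≤ b) (hbc : b ≤ c) :
    #{T : List.Vector X a × List.Vector X b × List.Vector X c |
        ¬ T.1.1 <+: T.2.1.1 ∧ ¬ T.1.1 <+: T.2.2.1 ∧ ¬ T.2.1.1 <+: T.2.2.1} =
      Fintype.card X ^ a * (Fintype.card X ^ b - Fintype.card X ^ (b - a)) *
        (Fintype.card X ^ c - Fintype.card X ^ (c - a) - Fintype.card X ^ (c - b)) := by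
  set K := Fintype.card X ^ c - Fintype.card X ^ (c - a) - Fintype.card X ^ (c - b)
  have hfiber (w : List.Vector X a) (v : List.Vector X b) :
      #{u : List.Vector X c | ¬ w.1 <+: v.1 ∧ ¬ w.1 <+: u.1 ∧ ¬ v.1 <+: u.1} =
        if ¬ w.1 <+: v.1 then K else 0 := by
    by_cases h : w.1 <+: v.1
    · simp [h]
    · have hwv : w.1.length ≤ v.1.length := by rw [w.2, v.2]; exact hab
      simp only [h, not_false_eq_true, true_and, if_true,
        card_vector_filter_not_prefix_and_not_prefix hwv (v.2.trans_le hbc) h, w.2, v.2, K]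
  calc _ = ∑ w : List.Vector X a, ∑ v : List.Vector X b,
        #{u : List.Vector X c | ¬ w.1 <+: v.1 ∧ ¬ w.1 <+: u.1 ∧ ¬ v.1 <+: u.1} := by
        simp only [card_filter, Fintype.sum_prod_type]
    _ = ∑ w : List.Vector X a, #{v : List.Vector X b | ¬ w.1 <+: v.1} * K := by
        simp only [hfiber, ← sum_filter, sum_const, smul_eq_mul]
    _ = _ := by
        simp only [fun w : List.Vector X a => card_vector_filter_not_prefix w.1 (w.2.trans_le hab),
          List.Vector.length_val, sum_const, card_univ, card_vector, smul_eq_mul, mul_assoc]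

end Cylinders

def prefixCodeTripleEquiv {X : Type*} {a b c : ℕ} (hab : a ≤ b) (hbc : b ≤ c) :
    {T : List X × List X × List X // T.1.length = a ∧ T.2.1.length = b ∧
      T.2.2.length = c ∧ IsPrefixCode ![T.1, T.2.1, T.2.2]} ≃
    {T : List.Vector X a × List.Vector X b × List.Vector X c //
      ¬ T.1.1 <+: T.2.1.1 ∧ ¬ T.1.1 <+: T.2.2.1 ∧ ¬ T.2.1.1 <+: T.2.2.1} where
  toFun T := ⟨(⟨_, T.2.1⟩, ⟨_, T.2.2.1⟩, ⟨_, T.2.2.2.1⟩),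
    (List.isPrefixCode_three_iff ((T.2.1.trans_le hab).trans_eq T.2.2.1.symm)
      ((T.2.2.1.trans_le hbc).trans_eq T.2.2.2.1.symm)).1 T.2.2.2.2⟩
  invFun T := ⟨(T.1.1.1, T.1.2.1.1, T.1.2.2.1), T.1.1.2, T.1.2.1.2, T.1.2.2.2,
    (List.isPrefixCode_three_iff ((T.1.1.2.trans_le hab).trans_eq T.1.2.1.2.symm)
      ((T.1.2.1.2.trans_le hbc).trans_eq T.1.2.2.2.symm)).2 T.2⟩
  left_inv _ := rfl
  right_inv _ := rfl

theorem count_prefix_codes_three_general {X : Type*} [Fintype X] (n a b c : ℕ)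
    (hX : Fintype.card X = n) (hab : a ≤ b) (hbc : b ≤ c) :
    Nat.card {T : List X × List X × List X //
        T.1.length = a ∧ T.2.1.length = b ∧ T.2.2.length = c ∧
        IsPrefixCode ![T.1, T.2.1, T.2.2]} =
      n ^ a * (n ^ b - n ^ (b - a)) * (n ^ c - n ^ (c - a) - n ^ (c - b)) := by
  classical
  rw [Nat.card_congr (prefixCodeTripleEquiv hab hbc), Nat.card_eq_fintype_card,
    Fintype.card_subtype, card_vector_filter_not_prefix_triple hab hbc, hX]

theorem count_prefix_codes_three {X : Type*} [Fintype X] (n a b c : ℕ) (hn : 2 ≤ n)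
    (hX : Fintype.card X = n) (hab : a ≤ b) (hbc : b ≤ c)
    (hkraft : (1 : ℝ) / n ^ a + 1 / n ^ b + 1 / n ^ c ≤ 1) :
    Nat.card {T : List X × List X × List X //
        T.1.length = a ∧ T.2.1.length = b ∧ T.2.2.length = c ∧
        IsPrefixCode ![T.1, T.2.1, T.2.2]} =
      n ^ a * (n ^ b - n ^ (b - a)) * (n ^ c - n ^ (c - a) - n ^ (c - b)) :=
  count_prefix_codes_three_general n a b c hX hab hbc
end

section
/- For an alphabet X with n ≥ 2 letters and a ≤ b ≤ c with n^{a+b} ≥ 2n^b + n^a (ensuring prefix codes exist), the number of prefix codes with length distribution (a,b,c) equals n^c·(n^{a+b} − 2n^b − n^a + n^{b−a} + 1). -/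
theorem Nat.card_subtype_not {α : Type*} [Finite α] (p : α → Prop) :
    (Nat.card {x // ¬ p x} : ℤ) = Nat.card α - Nat.card {x // p x} := by
  classical
  rw [← Nat.card_congr (Equiv.sumCompl p), Nat.card_sum]
  push_cast
  ring

theorem Nat.card_subtype_or_of_disjoint {α : Type*} [Finite α] {p q : α → Prop}
    (h : ∀ x, p x → ¬ q x) :
    Nat.card {x // p x ∨ q x} = Nat.card {x // p x} + Nat.card {x // q x} := by
  classical
  rw [← Nat.card_sum]
  exact Nat.card_congr <| subtypeOrEquiv p q <|
    Pi.disjoint_iff.2 fun x => Prop.disjoint_iff.2 fun hpq => h x hpq.1 hpq.2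

theorem Nat.card_sigma_of_forall_card_eq {ι : Type*} [Finite ι] {β : ι → Type*}
    [∀ i, Finite (β i)] {k : ℤ} (h : ∀ i, (Nat.card (β i) : ℤ) = k) :
    (Nat.card (Σ i, β i) : ℤ) = Nat.card ι * k := by
  have := Fintype.ofFinite ι
  rw [Nat.card_sigma]
  push_cast
  simp [h, Nat.card_eq_fintype_card]

section Words

variable {X : Type*}

theorem List.not_prefix_of_not_prefix_of_length_le_s1 {x y : List X} (h : ¬ x <+: y)
    (hl : x.length ≤ y.length) : ¬ y <+: x := fun hyx =>
  h (hyx.eq_of_length (le_antisymm hyx.length_le hl) ▸ List.prefix_refl y)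

theorem isPrefixCode_iff_of_monotone {m : ℕ} {C : Fin m → List X}
    (hC : Monotone fun i => (C i).length) :
    IsPrefixCode C ↔ ∀ i j, i < j → ¬ C i <+: C j := by
  refine ⟨fun h i j hij hp => hij.ne (h i j hp), fun h i j hp => ?_⟩
  rcases lt_trichotomy i j with hij | rfl | hji
  · exact absurd hp (h i j hij)
  · rfl
  · exact absurd hp (List.not_prefix_of_not_prefix_of_length_le_s1 (h j i hji) (hC hji.le))

theorem isPrefixCode_three_iff {w v u : List X} (hwv : w.length ≤ v.length)
    (hvu : v.length ≤ u.length) :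
    IsPrefixCode ![w, v, u] ↔ ¬ w <+: v ∧ ¬ w <+: u ∧ ¬ v <+: u := by
  rw [isPrefixCode_iff_of_monotone <|
    Fin.monotone_iff_le_succ.2 <| by simp [Fin.forall_fin_succ, hwv, hvu]]
  simp [Fin.forall_fin_succ, and_assoc]

def prefixExtensionEquiv (w : List X) {k : ℕ} (hk : w.length ≤ k) :
    {l : List.Vector X k // w <+: l.1} ≃ List.Vector X (k - w.length) where
  toFun l := ⟨l.1.1.drop w.length, by simp [l.1.2]⟩
  invFun t := ⟨⟨w ++ t.1, by simp [t.2, hk]⟩, List.prefix_append _ _⟩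
  left_inv l := Subtype.ext <| Subtype.ext <| List.prefix_iff_eq_append.1 l.2
  right_inv t := Subtype.ext List.drop_left

section Fintype

variable [Fintype X]

theorem card_vector_prefix (w : List X) {k : ℕ} (hk : w.length ≤ k) :
    Nat.card {l : List.Vector X k // w <+: l.1} = Fintype.card X ^ (k - w.length) := by
  rw [Nat.card_congr (prefixExtensionEquiv w hk), Nat.card_eq_fintype_card, card_vector]

theorem card_vector_not_prefix (w : List X) {k : ℕ} (hk : w.length ≤ k) :
    (Nat.card {l : List.Vector X k // ¬ w <+: l.1} : ℤ) =
      Fintype.card X ^ k - Fintype.card X ^ (k - w.length) := by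
  rw [Nat.card_subtype_not, card_vector_prefix w hk, Nat.card_eq_fintype_card, card_vector]
  push_cast
  rfl

theorem card_vector_not_prefix_two {w v : List X} (hwv : ¬ w <+: v) (hvw : ¬ v <+: w) {k : ℕ}
    (hw : w.length ≤ k) (hv : v.length ≤ k) :
    (Nat.card {l : List.Vector X k // ¬ w <+: l.1 ∧ ¬ v <+: l.1} : ℤ) =
      Fintype.card X ^ k - Fintype.card X ^ (k - w.length) - Fintype.card X ^ (k - v.length) := by
  have hdisj (l : List.Vector X k) (hw : w <+: l.1) : ¬ v <+: l.1 := fun hv =>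
    (List.prefix_or_prefix_of_prefix hw hv).elim hwv hvw
  simp_rw [← not_or]
  rw [Nat.card_subtype_not, Nat.card_subtype_or_of_disjoint hdisj, card_vector_prefix w hw,
    card_vector_prefix v hv, Nat.card_eq_fintype_card, card_vector]
  push_cast
  ring

end Fintype

def prefixCodeThreeEquiv {a b c : ℕ} (hab : a ≤ b) (hbc : b ≤ c) :
    {T : List X × List X × List X //
        T.1.length = a ∧ T.2.1.length = b ∧ T.2.2.length = c ∧
        IsPrefixCode ![T.1, T.2.1, T.2.2]} ≃
    Σ (w : List.Vector X a) (v : {v : List.Vector X b // ¬ w.1 <+: v.1}),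
      {u : List.Vector X c // ¬ w.1 <+: u.1 ∧ ¬ v.1.1 <+: u.1} where
  toFun := fun ⟨⟨w, v, u⟩, hw, hv, hu, hpc⟩ =>
    have h := (isPrefixCode_three_iff (by omega) (by omega)).1 hpc
    ⟨⟨w, hw⟩, ⟨⟨v, hv⟩, h.1⟩, ⟨u, hu⟩, h.2.1, h.2.2⟩
  invFun := fun ⟨⟨w, hw⟩, ⟨⟨v, hv⟩, hwv⟩, ⟨u, hu⟩, hwu, hvu⟩ =>
    ⟨⟨w, v, u⟩, hw, hv, hu,
      (isPrefixCode_three_iff (by dsimp only; omega) (by dsimp only; omega)).2 ⟨hwv, hwu, hvu⟩⟩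
  left_inv := fun ⟨⟨_, _, _⟩, _, _, _, _⟩ => rfl
  right_inv := fun ⟨⟨_, _⟩, ⟨⟨_, _⟩, _⟩, ⟨_, _⟩, _, _⟩ => rfl

end Words

theorem count_prefix_codes_three'_general {X : Type*} [Fintype X] (n a b c : ℕ)
    (hX : Fintype.card X = n) (hab : a ≤ b) (hbc : b ≤ c) :
    (Nat.card {T : List X × List X × List X //
        T.1.length = a ∧ T.2.1.length = b ∧ T.2.2.length = c ∧
        IsPrefixCode ![T.1, T.2.1, T.2.2]} : ℤ) =
      (n : ℤ) ^ c * ((n : ℤ) ^ (a + b) - 2 * (n : ℤ) ^ b - (n : ℤ) ^ a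
        + (n : ℤ) ^ (b - a) + 1) := by
  subst hX
  have hv (w : List.Vector X a) :
      (Nat.card {v : List.Vector X b // ¬ w.1 <+: v.1} : ℤ) =
        Fintype.card X ^ b - Fintype.card X ^ (b - a) := by
    rw [card_vector_not_prefix w.1 (by simp [hab]), w.2]
  have hu (w : List.Vector X a) (v : {v : List.Vector X b // ¬ w.1 <+: v.1}) :
      (Nat.card {u : List.Vector X c // ¬ w.1 <+: u.1 ∧ ¬ v.1.1 <+: u.1} : ℤ) =
        Fintype.card X ^ c - Fintype.card X ^ (c - a) - Fintype.card X ^ (c - b) := by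
    have hvw := List.not_prefix_of_not_prefix_of_length_le_s1 v.2 (by simp [hab])
    rw [card_vector_not_prefix_two v.2 hvw (by simp [hab.trans hbc]) (by simp [hbc]), w.2,
      v.1.2]
  rw [Nat.card_congr (prefixCodeThreeEquiv hab hbc), Nat.card_sigma_of_forall_card_eq fun w =>
    (Nat.card_sigma_of_forall_card_eq (hu w)).trans (by rw [hv w]), Nat.card_eq_fintype_card,
    card_vector]
  obtain ⟨d, rfl⟩ := Nat.exists_eq_add_of_le hab
  obtain ⟨e, rfl⟩ := Nat.exists_eq_add_of_le hbc
  simp only [add_assoc, Nat.add_sub_cancel_left, Nat.add_sub_add_left, Nat.cast_pow]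
  ring

theorem count_prefix_codes_three' {X : Type*} [Fintype X] (n a b c : ℕ) (hn : 2 ≤ n)
    (hX : Fintype.card X = n) (hab : a ≤ b) (hbc : b ≤ c)
    (hexist : 2 * n ^ b + n ^ a ≤ n ^ (a + b)) :
    (Nat.card {T : List X × List X × List X //
        T.1.length = a ∧ T.2.1.length = b ∧ T.2.2.length = c ∧
        IsPrefixCode ![T.1, T.2.1, T.2.2]} : ℤ) =
      (n : ℤ) ^ c * ((n : ℤ) ^ (a + b) - 2 * (n : ℤ) ^ b - (n : ℤ) ^ a
        + (n : ℤ) ^ (b - a) + 1) :=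
  count_prefix_codes_three'_general n a b c hX hab hbc
end

section
/- Let X be an alphabet with n ≥ 2 letters and c ≥ 1. A triple (x, y, w) with x, y ∈ X and w ∈ X^c is a uniquely decodable code if and only if x ≠ y and w is not a word all of whose letters lie in {x, y}. -/
/-
Let `k` be the length of the longest prefix of `w` over `{x, y}`; when `w` has a letter outside
`{x, y}`, `k < |w|`. Every concatenation `u` of code words has a longest `{x, y}`-prefix of
length at least `min k |u|`, since `x` and `y` are single letters of `{x, y}` and `w` starts
with `k` of them. So if two factorizations of one word first differ, one starting with `w` and
the other with `x` or `y`, that prefix has length exactly `k` in the first reading and more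
than `k` in the second.
-/

open List

namespace IsUDCode

variable {X : Type*} {m : ℕ} {C : Fin m → List X}

theorem injective (hC : IsUDCode C) : Function.Injective C := fun i j h => by
  simpa using hC [i] [j] (by simp [h])

theorem of_head_eq (hne : ∀ i, C i ≠ [])
    (hhead : ∀ i j (l₁ l₂ : List (Fin m)),
      C i ++ (l₁.map C).flatten = C j ++ (l₂.map C).flatten → i = j) :
    IsUDCode C := by
  intro l₁
  induction l₁ with
  | nil =>
    rintro (_ | ⟨j, l₂⟩) h
    · rfl
    · simp [hne] at h
  | cons i l₁ ih =>
    rintro (_ | ⟨j, l₂⟩) h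
    · simp [hne] at h
    · obtain rfl := hhead i j l₁ l₂ h
      rw [ih l₂ (append_cancel_left h)]

end IsUDCode

section

variable {X : Type*} (x y : X) (w : List X)

theorem exists_flatten_eq_of_forall_mem {v : List X} (hv : ∀ a ∈ v, a = x ∨ a = y) :
    ∃ l : List (Fin 3), 2 ∉ l ∧ (l.map ![[x], [y], w]).flatten = v := by
  induction v with
  | nil => exact ⟨[], by simp, rfl⟩
  | cons a v ih =>
    obtain ⟨l, h2, hl⟩ := ih fun b hb => hv b (mem_cons_of_mem a hb)
    rcases hv a mem_cons_self with rfl | rfl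
    · exact ⟨0 :: l, by simp [h2], by simp [hl]⟩
    · exact ⟨1 :: l, by simp [h2], by simp [hl]⟩

variable {x y} {p : X → Bool}

theorem min_le_length_takeWhile_flatten (hx : p x) (hy : p y) (l : List (Fin 3)) :
    min (w.takeWhile p).length (l.map ![[x], [y], w]).flatten.length ≤
      ((l.map ![[x], [y], w]).flatten.takeWhile p).length := by
  induction l with
  | nil => simp
  | cons i l ih =>
    fin_cases i
    · simp only [map_cons, flatten_cons, Fin.zero_eta, Matrix.cons_val_zero, singleton_append,
        takeWhile_cons_of_pos hx, length_cons]
      omega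
    · simp only [map_cons, flatten_cons, Fin.mk_one, Matrix.cons_val_one, Matrix.cons_val_zero,
        singleton_append, takeWhile_cons_of_pos hy, length_cons]
      omega
    · simp only [map_cons, flatten_cons, Fin.reduceFinMk, Matrix.cons_val, takeWhile_append]
      split <;> simp only [length_append] <;> omega

theorem append_ne_cons_flatten (hx : p x) (hy : p y) (hw : ¬ ∀ a ∈ w, p a)
    ⦃a : X⦄ (ha : p a) (B : List X) (l : List (Fin 3)) :
    w ++ B ≠ a :: (l.map ![[x], [y], w]).flatten := by
  intro h
  have hlt : (w.takeWhile p).length < w.length := by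
    refine (takeWhile_prefix p).length_le.lt_of_ne fun hlen => hw ?_
    exact takeWhile_eq_self_iff.mp ((takeWhile_prefix p).eq_of_length hlen)
  have hmin := min_le_length_takeWhile_flatten w hx hy l
  have hlen := congrArg length h
  have htake := congrArg (fun u => (u.takeWhile p).length) h
  simp only [takeWhile_append, takeWhile_cons_of_pos ha, hlt.ne, if_false, length_cons,
    length_append] at htake hlen
  omega

theorem head_eq_of_append_eq (hxy : x ≠ y) (hw : ¬ ∀ a ∈ w, a = x ∨ a = y) {i j : Fin 3}
    {l₁ l₂ : List (Fin 3)} (h : ![[x], [y], w] i ++ (l₁.map ![[x], [y], w]).flatten =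
      ![[x], [y], w] j ++ (l₂.map ![[x], [y], w]).flatten) : i = j := by
  classical
  have hw' : ¬ ∀ a ∈ w, decide (a = x ∨ a = y) := by simpa using hw
  have key := append_ne_cons_flatten (x := x) (y := y) (p := fun a => decide (a = x ∨ a = y)) w
    (by simp) (by simp) hw'
  fin_cases i <;> fin_cases j <;>
    simp only [Fin.zero_eta, Fin.mk_one, Fin.reduceFinMk, Fin.isValue, Matrix.cons_val_zero,
      Matrix.cons_val_one, Matrix.cons_val, cons_append, nil_append, cons.injEq, Fin.reduceEq] at h ⊢
  all_goals first
    | exact hxy h.1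
    | exact hxy h.1.symm
    | exact key (by simp) _ _ h
    | exact key (by simp) _ _ h.symm

end

theorem ud_one_one_c_iff_general {X : Type*} (x y : X) (w : List X) :
    IsUDCode ![[x], [y], w] ↔ x ≠ y ∧ ¬ (∀ a ∈ w, a = x ∨ a = y) := by
  refine ⟨fun hC => ⟨fun hxy => ?_, fun hw => ?_⟩, fun ⟨hxy, hw⟩ => ?_⟩
  · exact hC.injective.ne (by decide : (0 : Fin 3) ≠ 1) (by simp [hxy])
  · obtain ⟨l, h2, hl⟩ := exists_flatten_eq_of_forall_mem x y w hw
    exact h2 (hC l [2] (by simpa using hl) ▸ mem_singleton_self 2)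
  · have hw₀ : w ≠ [] := by
      rintro rfl
      simp at hw
    refine IsUDCode.of_head_eq (fun i => ?_) fun i j l₁ l₂ => head_eq_of_append_eq w hxy hw
    fin_cases i <;> simp [hw₀]

theorem ud_one_one_c_iff {X : Type*} [Fintype X] (n c : ℕ) (hn : 2 ≤ n)
    (hX : Fintype.card X = n) (hc : 1 ≤ c) (x y : X) (w : List X) (hw : w.length = c) :
    IsUDCode ![[x], [y], w] ↔ x ≠ y ∧ ¬ (∀ a ∈ w, a = x ∨ a = y) :=
  ud_one_one_c_iff_general x y w
end

section
/- Let C = (v_1,...,v_m) be a sequence of non-empty words over an alphabet X, and suppose there exist distinct indices μ, κ with v_μ = v_κ · v for some word v. If C is not a uniquely decodable code, then the sequence C' obtained from C by replacing v_μ with v (keeping all other entries the same) is also not a uniquely decodable code. -/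
/-!
Write `C' = Function.update C μ v`, so that `C μ = C' κ ++ C' μ`. Substituting the index word
`κ μ` for every occurrence of `μ` turns each factorization over `C` into one over `C'` of the same
word. The substitution `i ↦ [i]`, `μ ↦ [κ, μ]` is itself uniquely decodable, its reversal being a
prefix code, so different factorizations over `C` stay different over `C'`.
-/

section

variable {X : Type*} {m : ℕ}

theorem IsPrefixCode.isUDCode {C : Fin m → List X} (hC : IsPrefixCode C) (hne : ∀ i, C i ≠ []) :
    IsUDCode C := by
  intro l₁
  induction l₁ with
  | nil =>
    rintro (_ | ⟨j, s⟩) h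
    · rfl
    · simp_all
  | cons i t ih =>
    rintro (_ | ⟨j, s⟩) h
    · simp_all
    · simp only [List.map_cons, List.flatten_cons] at h
      obtain rfl : i = j := by
        rcases List.prefix_or_prefix_of_prefix (List.prefix_append (C i) (t.map C).flatten)
          (h ▸ List.prefix_append (C j) (s.map C).flatten) with hij | hji
        · exact hC i j hij
        · exact (hC j i hji).symm
      rw [ih s (List.append_cancel_left h)]

theorem IsUDCode.of_reverse {C : Fin m → List X} (h : IsUDCode fun i => (C i).reverse) :
    IsUDCode C := by
  have reverse_flatten_map (l : List (Fin m)) :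
      (l.map C).flatten.reverse = (l.reverse.map fun i => (C i).reverse).flatten := by
    simp [List.reverse_flatten, List.map_reverse, Function.comp_def]
  intro l₁ l₂ hl
  exact List.reverse_injective (h _ _ (by rw [← reverse_flatten_map, ← reverse_flatten_map, hl]))

theorem IsUDCode.of_substitution {n : ℕ} {C : Fin m → List X} {D : Fin n → List X}
    (σ : Fin m → List (Fin n)) (hC : ∀ i, C i = ((σ i).map D).flatten) (hσ : IsUDCode σ)
    (hD : IsUDCode D) : IsUDCode C := by
  have flatten_map (l : List (Fin m)) :
      (l.map C).flatten = ((l.map σ).flatten.map D).flatten := by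
    simp [List.map_flatten, List.flatten_flatten, Function.comp_def, ← hC]
  intro l₁ l₂ h
  exact hσ _ _ (hD _ _ (by rw [← flatten_map, ← flatten_map, h]))

theorem isUDCode_update_pair (μ κ : Fin m) :
    IsUDCode (Function.update (fun i => [i]) μ [κ, μ]) := by
  refine IsUDCode.of_reverse (IsPrefixCode.isUDCode ?_ ?_)
  · intro i j h
    by_cases hi : i = μ <;> by_cases hj : j = μ <;> simp_all
  · intro i
    by_cases hi : i = μ <;> simp [hi]

end

theorem not_ud_of_replace_general {X : Type*} {m : ℕ} (C : Fin m → List X)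
    (μ κ : Fin m) (hμκ : μ ≠ κ) (v : List X)
    (hfac : C μ = C κ ++ v) (hC : ¬ IsUDCode C) :
    ¬ IsUDCode (Function.update C μ v) := by
  refine fun hud => hC (IsUDCode.of_substitution _ (fun i => ?_) (isUDCode_update_pair μ κ) hud)
  rcases eq_or_ne i μ with rfl | hi
  · simp [Function.update_of_ne hμκ.symm, hfac]
  · simp [hi]

theorem not_ud_of_replace {X : Type*} {m : ℕ} (C : Fin m → List X)
    (hne : ∀ i, C i ≠ []) (μ κ : Fin m) (hμκ : μ ≠ κ) (v : List X)
    (hfac : C μ = C κ ++ v) (hC : ¬ IsUDCode C) :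
    ¬ IsUDCode (Function.update C μ v) :=
  not_ud_of_replace_general C μ κ hμκ v hfac hC
end

section
/- Over the binary alphabet {0,1}, for every odd c ≥ 1, the triple (1, 00, 1·0^c) is a uniquely decodable code, where 1·0^c denotes the word consisting of a 1 followed by c zeros. -/
/-!
Every concatenation of code-words begins with an even number of `0`s, since each code-word
either begins with `1` or is `00`. Hence the first code-word of a factorization is determined
by the word: `00` is the only code-word beginning with `0`, and after a leading `1` an even run
of `0`s means the factor was `1`, an odd run (`c` plus an even number) that it was `1·0^c`.
-/

theorem isUDCode_of_first_factor_unique {X : Type*} {m : ℕ} {C : Fin m → List X}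
    (hne : ∀ i, C i ≠ [])
    (hfirst : ∀ i j (l₁ l₂ : List (Fin m)),
      C i ++ (l₁.map C).flatten = C j ++ (l₂.map C).flatten → i = j) :
    IsUDCode C := by
  intro l₁
  induction l₁ with
  | nil =>
    rintro (_ | ⟨j, l₂⟩) h
    · rfl
    · exact absurd (List.append_eq_nil_iff.mp h.symm).1 (hne j)
  | cons i l₁ ih =>
    rintro (_ | ⟨j, l₂⟩) h
    · exact absurd (List.append_eq_nil_iff.mp h).1 (hne i)
    · simp only [List.map_cons, List.flatten_cons] at h
      obtain rfl := hfirst i j l₁ l₂ h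
      rw [ih l₂ (List.append_cancel_left h)]

def leadingFalses (w : List Bool) : ℕ := (w.takeWhile (!·)).length

@[simp]
lemma leadingFalses_true_cons (w : List Bool) : leadingFalses (true :: w) = 0 := by
  simp [leadingFalses]

@[simp]
lemma leadingFalses_false_cons (w : List Bool) :
    leadingFalses (false :: w) = leadingFalses w + 1 := by
  simp [leadingFalses]

lemma leadingFalses_replicate_append (n : ℕ) (w : List Bool) :
    leadingFalses (List.replicate n false ++ w) = n + leadingFalses w := by
  induction n with
  | zero => simp
  | succ n ih => simp [List.replicate_succ, ih, Nat.add_right_comm]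

/-- The code `(1, 00, 1·0^c)`, with `true` for `1` and `false` for `0`. -/
abbrev oneZeroCode (c : ℕ) : Fin 3 → List Bool :=
  ![[true], [false, false], true :: List.replicate c false]

lemma even_leadingFalses_flatten (c : ℕ) (l : List (Fin 3)) :
    Even (leadingFalses (l.map (oneZeroCode c)).flatten) := by
  induction l with
  | nil => simp [leadingFalses]
  | cons i l ih =>
    fin_cases i
    · simp
    · simpa [Nat.even_add_one] using ih
    · simp

lemma flatten_ne_replicate_append {c : ℕ} (hodd : Odd c) (l₁ l₂ : List (Fin 3)) :
    (l₁.map (oneZeroCode c)).flatten ≠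
      List.replicate c false ++ (l₂.map (oneZeroCode c)).flatten := by
  intro h
  have h₁ := even_leadingFalses_flatten c l₁
  rw [h, leadingFalses_replicate_append, Nat.even_add] at h₁
  exact Nat.not_even_iff_odd.mpr hodd (h₁.mpr (even_leadingFalses_flatten c l₂))

theorem ud_one_doublezero_one_zeros_general (c : ℕ) (hodd : Odd c) :
    IsUDCode ![[true], [false, false], true :: List.replicate c false] := by
  show IsUDCode (oneZeroCode c)
  refine isUDCode_of_first_factor_unique (fun i => by fin_cases i <;> simp) fun i j l₁ l₂ h => ?_
  fin_cases i <;> fin_cases j <;> simp at h ⊢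
  · exact flatten_ne_replicate_append hodd l₁ l₂ h
  · exact flatten_ne_replicate_append hodd l₂ l₁ h.symm

theorem ud_one_doublezero_one_zeros (c : ℕ) (hc : 1 ≤ c) (hodd : Odd c) :
    IsUDCode ![[true], [false, false], true :: List.replicate c false] :=
  ud_one_doublezero_one_zeros_general c hodd
end

section
/- Over the binary alphabet {0,1}, for every c ≥ 1, a word w of length c makes the triple (1, 01, w) fail to be a uniquely decodable code if and only if w contains no two consecutive 0's. -/
theorem isUDCode_of_head_unique {X : Type*} {m : ℕ} {C : Fin m → List X}
    (hne : ∀ i, C i ≠ [])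
    (hhead : ∀ i j (l₁ l₂ : List (Fin m)),
      C i ++ (l₁.map C).flatten = C j ++ (l₂.map C).flatten → i = j) :
    IsUDCode C := by
  intro l₁
  induction l₁ with
  | nil =>
    rintro (_ | ⟨j, l₂⟩) h
    · rfl
    · exact absurd (List.append_eq_nil_iff.mp h.symm).1 (hne j)
  | cons i l₁ ih =>
    rintro (_ | ⟨j, l₂⟩) h
    · exact absurd (List.append_eq_nil_iff.mp h).1 (hne i)
    · simp only [List.map_cons, List.flatten_cons] at h
      obtain rfl := hhead i j l₁ l₂ h
      rw [ih l₂ (List.append_cancel_left h)]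

def HasZeroZeroAt (w : List Bool) (k : ℕ) : Prop :=
  w[k]? = some false ∧ w[k + 1]? = some false

namespace HasZeroZeroAt

variable {w : List Bool} {k : ℕ}

theorem lt_length (h : HasZeroZeroAt w k) : k + 1 < w.length :=
  List.getElem?_eq_some_iff.mp h.2 |>.1

theorem append_right (h : HasZeroZeroAt w k) (t : List Bool) : HasZeroZeroAt (w ++ t) k := by
  have := h.lt_length
  unfold HasZeroZeroAt at *
  rwa [List.getElem?_append_left (by omega), List.getElem?_append_left (by omega)]

theorem of_append_right {t : List Bool} (h : HasZeroZeroAt (w ++ t) k) (hk : k + 1 < w.length) :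
    HasZeroZeroAt w k := by
  unfold HasZeroZeroAt at *
  rwa [List.getElem?_append_left (by omega), List.getElem?_append_left (by omega)] at h

theorem of_append_left {g : List Bool} (h : HasZeroZeroAt (g ++ w) k) (hk : g.length ≤ k) :
    HasZeroZeroAt w (k - g.length) := by
  unfold HasZeroZeroAt at *
  rwa [List.getElem?_append_right hk, List.getElem?_append_right (by omega),
    Nat.sub_add_comm hk] at h

theorem exists_of_infix (h : [false, false] <:+: w) : ∃ k, HasZeroZeroAt w k := by
  obtain ⟨k, -, hk⟩ := List.infix_iff_getElem?.mp h
  exact ⟨k, by simpa using hk 0 (by simp), by simpa [Nat.add_comm] using hk 1 (by simp)⟩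

end HasZeroZeroAt

-- The submonoid `{1, 01}*` of binary words.
inductive OneZeroOneStar : List Bool → Prop
  | nil : OneZeroOneStar []
  | one {s : List Bool} : OneZeroOneStar s → OneZeroOneStar (true :: s)
  | zeroOne {s : List Bool} : OneZeroOneStar s → OneZeroOneStar (false :: true :: s)

namespace OneZeroOneStar

theorem append {s t : List Bool} (hs : OneZeroOneStar s) (ht : OneZeroOneStar t) :
    OneZeroOneStar (s ++ t) := by
  induction hs with
  | nil => exact ht
  | one _ ih => exact one ih
  | zeroOne _ ih => exact zeroOne ih

theorem getElem?_succ_eq_true {s : List Bool} (hs : OneZeroOneStar s) :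
    ∀ {i : ℕ}, s[i]? = some false → s[i + 1]? = some true := by
  induction hs with
  | nil => simp
  | one _ ih => rintro (_ | i) h <;> simp_all
  | zeroOne _ ih => rintro (_ | _ | i) h <;> simp_all

theorem exists_flatten {s : List Bool} (hs : OneZeroOneStar s) (w : List Bool) :
    ∃ l : List (Fin 3), 2 ∉ l ∧ (l.map ![[true], [false, true], w]).flatten = s := by
  induction hs with
  | nil => exact ⟨[], by simp, rfl⟩
  | one _ ih =>
    obtain ⟨l, hl, rfl⟩ := ih
    exact ⟨0 :: l, by simp [hl], rfl⟩
  | zeroOne _ ih =>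
    obtain ⟨l, hl, rfl⟩ := ih
    exact ⟨1 :: l, by simp [hl], rfl⟩

theorem or_eq_append_false_of_not_infix :
    ∀ {w : List Bool}, ¬ [false, false] <:+: w →
      OneZeroOneStar w ∨ ∃ g, OneZeroOneStar g ∧ w = g ++ [false]
  | [], _ => .inl nil
  | [false], _ => .inr ⟨[], nil, rfl⟩
  | false :: false :: s, h => absurd (List.prefix_append _ s).isInfix h
  | false :: true :: s, h => by
    rcases or_eq_append_false_of_not_infix fun h' => h (List.infix_cons (List.infix_cons h'))
      with hs | ⟨g, hg, rfl⟩
    · exact .inl (zeroOne hs)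
    · exact .inr ⟨false :: true :: g, zeroOne hg, rfl⟩
  | true :: s, h => by
    rcases or_eq_append_false_of_not_infix fun h' => h (List.infix_cons h')
      with hs | ⟨g, hg, rfl⟩
    · exact .inl (one hs)
    · exact .inr ⟨true :: g, one hg, rfl⟩

theorem length_le_of_hasZeroZeroAt_append {g t : List Bool} {k : ℕ} (hg : OneZeroOneStar g)
    (h : HasZeroZeroAt (g ++ t) k) : g.length ≤ k := by
  by_contra! hk
  have hgk : g[k]? = some false := by rw [← List.getElem?_append_left hk]; exact h.1
  have hgk1 := hg.getElem?_succ_eq_true hgk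
  have hk1 := h.2
  rw [List.getElem?_append_left (List.getElem?_eq_some_iff.mp hgk1).1, hgk1] at hk1
  simp at hk1

theorem append_append_ne {g w : List Bool} {k : ℕ} (hg : OneZeroOneStar g) (hg0 : g ≠ [])
    (hk : HasZeroZeroAt w k) (hmin : ∀ j, HasZeroZeroAt w j → k ≤ j) (x y : List Bool) :
    g ++ (w ++ x) ≠ w ++ y := by
  intro h
  have hgw : HasZeroZeroAt (g ++ (w ++ x)) k := h ▸ hk.append_right y
  have hgk := hg.length_le_of_hasZeroZeroAt_append hgw
  have hglen := List.length_pos_iff.mpr hg0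
  have hkw := hk.lt_length
  have := hmin _ ((hgw.of_append_left hgk).of_append_right (by omega))
  omega

theorem append_flatten_ne {g w : List Bool} {k : ℕ} (hk : HasZeroZeroAt w k)
    (hmin : ∀ j, HasZeroZeroAt w j → k ≤ j) (l : List (Fin 3)) (hg : OneZeroOneStar g)
    (hg0 : g ≠ []) (r : List Bool) :
    g ++ (l.map ![[true], [false, true], w]).flatten ≠ w ++ r := by
  induction l generalizing g with
  | nil =>
    intro h
    rw [List.map_nil, List.flatten_nil, List.append_nil] at h
    subst h
    have hgk := hg.length_le_of_hasZeroZeroAt_append ((hk.append_right r).append_right [])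
    have hkw := hk.lt_length
    rw [List.length_append] at hgk
    omega
  | cons i l ih =>
    fin_cases i
    · simpa using ih (hg.append (one nil)) (by simp)
    · simpa using ih (hg.append (zeroOne nil)) (by simp)
    · simpa using hg.append_append_ne hg0 hk hmin _ r

end OneZeroOneStar

theorem not_isUDCode_of_not_infix {w : List Bool} (h : ¬ [false, false] <:+: w) :
    ¬ IsUDCode ![[true], [false, true], w] := by
  intro hud
  rcases OneZeroOneStar.or_eq_append_false_of_not_infix h with hw | ⟨g, hg, rfl⟩
  · obtain ⟨l, hl, hlw⟩ := hw.exists_flatten w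
    have h2l := hud [2] l (by simpa using hlw.symm)
    exact hl (h2l ▸ List.mem_singleton_self 2)
  · obtain ⟨l, hl, hlg⟩ := hg.exists_flatten (g ++ [false])
    have h2l := hud [2, 0] (l ++ [1]) (by simp [hlg])
    have h2 : (2 : Fin 3) ∈ l ++ [1] := h2l ▸ by simp
    exact hl (by simpa using h2)

open OneZeroOneStar in
theorem isUDCode_of_infix {w : List Bool} (h : [false, false] <:+: w) :
    IsUDCode ![[true], [false, true], w] := by
  classical
  have hex := HasZeroZeroAt.exists_of_infix h
  have hk := Nat.find_spec hex
  have hmin : ∀ j, HasZeroZeroAt w j → Nat.find hex ≤ j := fun j hj => Nat.find_min' hex hj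
  have hne (l : List (Fin 3)) (g r : List Bool) (hg : OneZeroOneStar g) (hg0 : g ≠ []) :=
    hg.append_flatten_ne hk hmin l hg0 r
  refine isUDCode_of_head_unique (fun i => ?_) (fun i j l₁ l₂ h => ?_)
  · fin_cases i <;> simp
    rintro rfl
    simp at h
  · fin_cases i <;> fin_cases j <;> simp at h ⊢
    · exact hne l₁ [true] _ (one nil) (by simp) h
    · exact hne l₁ [false, true] _ (zeroOne nil) (by simp) h
    · exact hne l₂ [true] _ (one nil) (by simp) h.symm
    · exact hne l₂ [false, true] _ (zeroOne nil) (by simp) h.symm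

theorem not_ud_one_zeroone_iff_general (w : List Bool) :
    ¬ IsUDCode ![[true], [false, true], w] ↔ ¬ [false, false] <:+: w :=
  ⟨fun hud h => hud (isUDCode_of_infix h), not_isUDCode_of_not_infix⟩

theorem not_ud_one_zeroone_iff (c : ℕ) (hc : 1 ≤ c) (w : List Bool) (hw : w.length = c) :
    ¬ IsUDCode ![[true], [false, true], w] ↔ ¬ [false, false] <:+: w :=
  not_ud_one_zeroone_iff_general w
end

section
/- Over the binary alphabet {0,1}, for every c ≥ 1, the number of uniquely decodable codes with length distribution (1,2,c) equals 3·2^{c+1} − 2F_{c+4} − 2(c mod 2), where F_n is the n-th Fibonacci number (F_1 = F_2 = 1). -/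
/-!
Complementing all letters and reversing all words preserve unique decodability, so only
`x = 0` matters, with `v ∈ {00, 10, 11}` (and `01` as the mirror image of `10`); `v = 00`
never gives a code. For `v = 1b` the words `0` and `1b` form a prefix code whose products are
the words of `{0, 1b}*`, and the third word `w` keeps the code uniquely decodable as soon as a
product of code words starting with `w` never also reads as a nonempty word of `{0, 1b}*`
followed by `w` and code words. Splitting `w = m 1 (¬b) z` with `m ∈ {0, 1b}*` makes the
position of the first `w` readable off the word. Such a split exists iff `w0 ∉ {0,10}*` for
`b = 0`, and, up to reversing `w`, iff `w ∉ {0,11}*` contains a `0` for `b = 1`; otherwise an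
explicit double factorization exists. The words of length `n` in `{0, 1b}*` satisfy the
Fibonacci recursion, which yields `2^c - F(c+2)` good words `w` for `v = 10` and for `v = 01`,
and `2^c - F(c+1) - (c mod 2)` for `v = 11`; complementation doubles the total.
-/

open List

section Extension

variable {α : Type*} {m : ℕ} {C : Fin m → List α} {k : Fin m}

theorem exists_eq_append_of_flatMap_eq_append (hne : ∀ i, i ≠ k → C i ≠ [])
    (hpre : ∀ i j, i ≠ k → j ≠ k → C i <+: C j → i = j) {g₁ g₂ : List (Fin m)} {a : List α}
    (h₁ : k ∉ g₁) (h₂ : k ∉ g₂) (h : g₂.flatMap C = g₁.flatMap C ++ a) :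
    ∃ g, g₂ = g₁ ++ g := by
  induction g₁ generalizing g₂ with
  | nil => exact ⟨g₂, rfl⟩
  | cons i g₁ ih =>
    rw [mem_cons, not_or] at h₁
    cases g₂ with
    | nil => simp [hne i (Ne.symm h₁.1)] at h
    | cons j g₂ =>
      rw [mem_cons, not_or] at h₂
      simp only [flatMap_cons, append_assoc] at h
      obtain rfl : i = j := by
        rcases prefix_or_prefix_of_prefix (h ▸ prefix_append _ _) (prefix_append _ _) with hij | hji
        · exact (hpre j i (Ne.symm h₂.1) (Ne.symm h₁.1) hij).symm
        · exact hpre i j (Ne.symm h₁.1) (Ne.symm h₂.1) hji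
      obtain ⟨g, rfl⟩ := ih h₁.2 h₂.2 (append_cancel_left h)
      exact ⟨g, rfl⟩

theorem eq_of_flatMap_eq_of_notMem (hne : ∀ i, i ≠ k → C i ≠ [])
    (hpre : ∀ i j, i ≠ k → j ≠ k → C i <+: C j → i = j) {l₁ l₂ : List (Fin m)}
    (h₁ : k ∉ l₁) (h₂ : k ∉ l₂) (h : l₁.flatMap C = l₂.flatMap C) : l₁ = l₂ := by
  obtain ⟨g, rfl⟩ := exists_eq_append_of_flatMap_eq_append hne hpre h₁ h₂ (by rw [h, append_nil])
  suffices g = [] by rw [this, append_nil]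
  have hg : ∀ i ∈ g, C i = [] := by simpa [flatMap_eq_nil_iff] using h
  refine eq_nil_iff_forall_not_mem.2 fun i hi => hne i ?_ (hg i hi)
  rintro rfl
  exact h₂ (mem_append_right _ hi)

theorem eq_and_flatMap_eq_of_flatMap_append_cons_eq (hne : ∀ i, C i ≠ [])
    (hpre : ∀ i j, i ≠ k → j ≠ k → C i <+: C j → i = j)
    (hshift : ∀ g t₁ t₂ : List (Fin m), k ∉ g →
      C k ++ t₁.flatMap C = g.flatMap C ++ (C k ++ t₂.flatMap C) → g.flatMap C = [])
    {g₁ g₂ t₁ t₂ : List (Fin m)} (h₁ : k ∉ g₁) (h₂ : k ∉ g₂)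
    (h : (g₁ ++ k :: t₁).flatMap C = (g₂ ++ k :: t₂).flatMap C) :
    g₁ = g₂ ∧ t₁.flatMap C = t₂.flatMap C := by
  have key : ∀ {g₁ g₂ t₁ t₂ : List (Fin m)} {a : List α}, k ∉ g₁ → k ∉ g₂ →
      g₂.flatMap C = g₁.flatMap C ++ a → C k ++ t₁.flatMap C = a ++ (C k ++ t₂.flatMap C) →
      g₂ = g₁ ∧ t₁.flatMap C = t₂.flatMap C := by
    intro g₁ g₂ t₁ t₂ a h₁ h₂ hg ht
    obtain ⟨g, rfl⟩ := exists_eq_append_of_flatMap_eq_append (fun i _ => hne i) hpre h₁ h₂ hg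
    obtain rfl : a = g.flatMap C := by simpa using hg.symm
    have hg_nil := hshift g t₁ t₂ (fun hk => h₂ (mem_append_right _ hk)) ht
    refine ⟨eq_of_flatMap_eq_of_notMem (fun i _ => hne i) hpre h₂ h₁ (by simp [hg_nil]), ?_⟩
    simpa [hg_nil] using ht
  simp only [flatMap_append, flatMap_cons] at h
  rcases append_eq_append_iff.1 h with ⟨a, hg, ht⟩ | ⟨a, hg, ht⟩
  · exact (key h₁ h₂ hg ht).imp Eq.symm id
  · exact (key h₂ h₁ hg ht).imp id Eq.symm

theorem isUDCode_of_prefix_of_shift (hne : ∀ i, C i ≠ [])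
    (hpre : ∀ i j, i ≠ k → j ≠ k → C i <+: C j → i = j)
    (hshift : ∀ g t₁ t₂ : List (Fin m), k ∉ g →
      C k ++ t₁.flatMap C = g.flatMap C ++ (C k ++ t₂.flatMap C) → g.flatMap C = []) :
    IsUDCode C := by
  have hsplit {g₁ g₂ t₁ t₂ : List (Fin m)} (h₁ : k ∉ g₁) (h₂ : k ∉ g₂)
      (h : (g₁ ++ k :: t₁).flatMap C = (g₂ ++ k :: t₂).flatMap C) :=
    eq_and_flatMap_eq_of_flatMap_append_cons_eq hne hpre hshift h₁ h₂ h
  have hmixed {l g t : List (Fin m)} (hl : k ∉ l) (hg : k ∉ g) :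
      l.flatMap C ≠ (g ++ k :: t).flatMap C := fun h => by
    -- appending `k` to both sides puts a factorization without `k` into the scope of `hsplit`
    have := (hsplit (t₁ := []) (t₂ := t ++ [k]) hl hg (by simp [h])).2
    simp [hne k] at this
  intro l₁
  induction hn : l₁.length using Nat.strong_induction_on generalizing l₁ with
  | _ n ih =>
    intro l₂ h
    change l₁.flatMap C = l₂.flatMap C at h
    by_cases hk₁ : k ∈ l₁ <;> by_cases hk₂ : k ∈ l₂
    · obtain ⟨g₁, t₁, hg₁, rfl, -⟩ := exists_erase_eq hk₁
      obtain ⟨g₂, t₂, hg₂, rfl, -⟩ := exists_erase_eq hk₂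
      obtain ⟨rfl, ht⟩ := hsplit hg₁ hg₂ h
      rw [ih t₁.length (by simp [← hn]; omega) t₁ rfl t₂ ht]
    · obtain ⟨g₁, t₁, hg₁, rfl, -⟩ := exists_erase_eq hk₁
      exact absurd h.symm (hmixed hk₂ hg₁)
    · obtain ⟨g₂, t₂, hg₂, rfl, -⟩ := exists_erase_eq hk₂
      exact absurd h (hmixed hk₁ hg₂)
    · exact eq_of_flatMap_eq_of_notMem (fun i _ => hne i) hpre hk₁ hk₂ h

end Extension

section Symmetry

variable {α β : Type*} {m : ℕ} {C : Fin m → List α}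

theorem isUDCode_map_iff {f : α → β} (hf : Function.Injective f) :
    IsUDCode (List.map f ∘ C) ↔ IsUDCode C := by
  have hJ (l : List (Fin m)) : (l.map (List.map f ∘ C)).flatten = ((l.map C).flatten).map f := by
    simp [map_flatten]
  simp only [IsUDCode, hJ, (map_injective_iff.2 hf).eq_iff]

theorem isUDCode_reverse_iff : IsUDCode (List.reverse ∘ C) ↔ IsUDCode C := by
  have hJ (l : List (Fin m)) :
      (l.map (List.reverse ∘ C)).flatten = ((l.reverse.map C).flatten).reverse := by
    simp [reverse_flatten]
  simp only [IsUDCode, hJ, reverse_inj]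
  exact ⟨fun h l₁ l₂ he => by simpa using h l₁.reverse l₂.reverse (by simpa using he),
    fun h l₁ l₂ he => reverse_injective (h _ _ he)⟩

end Symmetry

/-- `Factors b u` says that `u` is a product of the words `[false]` and `[true, b]`. -/
inductive Factors (b : Bool) : List Bool → Prop
  | nil : Factors b []
  | cons_false {u : List Bool} : Factors b u → Factors b (false :: u)
  | cons_true {u : List Bool} : Factors b u → Factors b (true :: b :: u)

namespace Factors

variable {b : Bool} {u v : List Bool}

@[simp] theorem cons_false_iff : Factors b (false :: u) ↔ Factors b u :=
  ⟨by rintro ⟨⟩; assumption, cons_false⟩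

@[simp] theorem cons_true_cons_iff {c : Bool} : Factors b (true :: c :: u) ↔ c = b ∧ Factors b u :=
  ⟨by rintro ⟨⟩; exact ⟨rfl, ‹_›⟩, by rintro ⟨rfl, h⟩; exact cons_true h⟩

@[simp] theorem not_singleton_true : ¬ Factors b [true] := by rintro ⟨⟩

theorem append (hu : Factors b u) (hv : Factors b v) : Factors b (u ++ v) := by
  induction hu with
  | nil => exact hv
  | cons_false _ ih => exact ih.cons_false
  | cons_true _ ih => exact ih.cons_true

theorem reverse (hu : Factors true u) : Factors true u.reverse := by
  induction hu with
  | nil => exact nil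
  | cons_false _ ih => simpa using ih.append (nil.cons_false)
  | cons_true _ ih => simpa using ih.append (nil.cons_true)

theorem replicate_true_iff : ∀ {n : ℕ}, Factors true (replicate n true) ↔ Even n
  | 0 => by simp [nil]
  | 1 => by simp
  | n + 2 => by simp [replicate_succ, replicate_true_iff (n := n), Nat.even_add_one]

theorem eq_of_append_cons_cons_eq {m₁ m₂ z₁ z₂ : List Bool} (h₁ : Factors b m₁)
    (h₂ : Factors b m₂) (h : m₁ ++ true :: (!b) :: z₁ = m₂ ++ true :: (!b) :: z₂) : m₁ = m₂ := by
  induction h₁ generalizing m₂ with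
  | nil => cases h₂ <;> simp_all
  | cons_false _ ih =>
    cases h₂ with
    | cons_false h₂ => simpa using ih h₂ (by simpa using h)
    | _ => simp at h
  | cons_true _ ih =>
    cases h₂ with
    | cons_true h₂ => simpa using ih h₂ (by simpa using h)
    | _ => simp at h

theorem exists_eq_append_of_not : ∀ {u : List Bool}, ¬ Factors b u →
    ∃ m z, Factors b m ∧ z.head? ≠ some b ∧ u = m ++ true :: z
  | [], h => absurd nil h
  | false :: u, h => by
    obtain ⟨m, z, hm, hz, rfl⟩ := exists_eq_append_of_not (by simpa using h)
    exact ⟨false :: m, z, hm.cons_false, hz, rfl⟩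
  | [true], _ => ⟨[], [], nil, by simp, rfl⟩
  | true :: c :: u, h => by
    by_cases hc : c = b
    · subst c
      obtain ⟨m, z, hm, hz, rfl⟩ := exists_eq_append_of_not (by simpa using h)
      exact ⟨true :: b :: m, z, hm.cons_true, hz, rfl⟩
    · exact ⟨[], c :: u, nil, by simpa using hc, rfl⟩

theorem append_true_ne_true_cons {m₁ m₂ : List Bool} (h₁ : Factors true m₁)
    (h₂ : Factors true m₂) (hf : false ∈ m₁) : m₁ ++ [true] ≠ true :: m₂ := by
  induction h₁ generalizing m₂ with
  | nil => simp at hf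
  | cons_false => simp
  | @cons_true u _ ih =>
    rintro ⟨⟩
    cases u with
    | nil => simp at hf
    | cons c u =>
      obtain ⟨rfl, h⟩ := cons_true_cons_iff.1 h₂
      exact ih h (by simpa using hf) rfl

end Factors

theorem exists_eq_append_of_not_factors_append_false : ∀ {w : List Bool},
    ¬ Factors false (w ++ [false]) → ∃ m z, Factors false m ∧ w = m ++ true :: true :: z
  | [], h => absurd (Factors.nil.cons_false) h
  | false :: w, h => by
    obtain ⟨m, z, hm, rfl⟩ := exists_eq_append_of_not_factors_append_false (by simpa using h)
    exact ⟨false :: m, z, hm.cons_false, rfl⟩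
  | [true], h => absurd (by simp [Factors.nil]) h
  | true :: false :: w, h => by
    obtain ⟨m, z, hm, rfl⟩ := exists_eq_append_of_not_factors_append_false (by simpa using h)
    exact ⟨true :: false :: m, z, hm.cons_true, rfl⟩
  | true :: true :: w, _ => ⟨[], w, Factors.nil, rfl⟩

section ZeroOneCode

variable {b : Bool} {w : List Bool}

theorem factors_flatMap {t : List (Fin 3)} (ht : 2 ∉ t) :
    Factors b (t.flatMap ![[false], [true, b], w]) := by
  induction t with
  | nil => exact Factors.nil
  | cons i t ih =>
    rw [mem_cons, not_or] at ht
    fin_cases i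
    · exact (ih ht.2).cons_false
    · exact (ih ht.2).cons_true
    · exact absurd rfl ht.1

theorem exists_flatMap_eq_of_factors {u : List Bool} (h : Factors b u) :
    ∃ t : List (Fin 3), 2 ∉ t ∧ t.flatMap ![[false], [true, b], w] = u := by
  induction h with
  | nil => exact ⟨[], by simp, rfl⟩
  | cons_false _ ih =>
    obtain ⟨t, ht, rfl⟩ := ih
    exact ⟨0 :: t, by simp [ht], rfl⟩
  | cons_true _ ih =>
    obtain ⟨t, ht, rfl⟩ := ih
    exact ⟨1 :: t, by simp [ht], rfl⟩

theorem not_isUDCode_of_factors_flatMap {t : List (Fin 3)} (ht : 2 ∈ t)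
    (h : Factors b (t.flatMap ![[false], [true, b], w])) :
    ¬ IsUDCode ![[false], [true, b], w] := fun hud => by
  obtain ⟨t', ht', he⟩ := exists_flatMap_eq_of_factors (w := w) h
  exact ht' (hud t' t he ▸ ht)

theorem isUDCode_of_factors_append {m z : List Bool} (hm : Factors b m) :
    IsUDCode ![[false], [true, b], m ++ true :: (!b) :: z] := by
  apply isUDCode_of_prefix_of_shift (k := 2)
  · intro i; fin_cases i <;> simp
  · intro i j hi hj; fin_cases i <;> fin_cases j <;> simp_all
  · intro g t₁ t₂ hg h
    have := hm.eq_of_append_cons_cons_eq ((factors_flatMap hg).append hm) (by simpa using h)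
    simpa using this

theorem not_isUDCode_zero_zeroZero : ¬ IsUDCode ![[false], [false, false], w] :=
  fun h => by simpa using h [0, 0] [1] rfl

theorem isUDCode_zero_oneZero_iff :
    IsUDCode ![[false], [true, false], w] ↔ ¬ Factors false (w ++ [false]) := by
  refine ⟨fun h hw => not_isUDCode_of_factors_flatMap (t := [2, 0]) (by simp) (by simpa) h,
    fun hw => ?_⟩
  obtain ⟨m, z, hm, rfl⟩ := exists_eq_append_of_not_factors_append_false hw
  exact isUDCode_of_factors_append hm

theorem isUDCode_zero_oneOne (hw : ¬ Factors true w) (hf : false ∈ w) :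
    IsUDCode ![[false], [true, true], w] := by
  obtain ⟨m, z, hm, hz, rfl⟩ := Factors.exists_eq_append_of_not hw
  rcases z with _ | ⟨_ | _, z⟩
  · -- `w = m ++ [true]`: split the reversed word instead; it cannot end the same way
    have hrev : ¬ Factors true (m ++ [true]).reverse := fun h => hw (by simpa using h.reverse)
    obtain ⟨m', z', hm', hz', he⟩ := Factors.exists_eq_append_of_not hrev
    rcases z' with _ | ⟨_ | _, z'⟩
    · refine absurd ?_ (hm.append_true_ne_true_cons hm'.reverse (by simpa using hf))
      simpa using congrArg List.reverse he
    · rw [← isUDCode_reverse_iff, ← FinVec.map_eq]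
      show IsUDCode ![[false], [true, true], (m ++ [true]).reverse]
      rw [he]
      exact isUDCode_of_factors_append hm'
    · simp at hz'
  · exact isUDCode_of_factors_append hm
  · simp at hz

theorem isUDCode_zero_oneOne_iff :
    IsUDCode ![[false], [true, true], w] ↔ ¬ Factors true w ∧ false ∈ w := by
  refine ⟨fun h => ⟨fun hw => not_isUDCode_of_factors_flatMap (t := [2]) (by simp) (by simpa) h,
    by_contra fun hf => ?_⟩, fun h => isUDCode_zero_oneOne h.1 h.2⟩
  have hw : w = replicate w.length true := eq_replicate_iff.2 ⟨rfl, by simpa using hf⟩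
  refine not_isUDCode_of_factors_flatMap (t := [2, 2]) (by simp) ?_ h
  rw [flatMap_cons, flatMap_cons, flatMap_nil, append_nil, hw]
  simp [replicate_append_replicate, Factors.replicate_true_iff]

end ZeroOneCode

def words : ℕ → Finset (List Bool)
  | 0 => {[]}
  | n + 1 => (words n).map ⟨cons false, cons_injective⟩ ∪ (words n).map ⟨cons true, cons_injective⟩

theorem mem_words {n : ℕ} {w : List Bool} : w ∈ words n ↔ w.length = n := by
  induction n generalizing w with
  | zero => simp [words]
  | succ n ih =>
    cases w with
    | nil => simp [words]
    | cons a w => cases a <;> simp [words, ih]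

theorem sum_words_two {M : Type*} [AddCommMonoid M] (f : List Bool → M) :
    ∑ v ∈ words 2, f v = f [false, false] + f [false, true] + f [true, false] + f [true, true] := by
  rw [show words 2 = {[false, false], [false, true], [true, false], [true, true]} by decide]
  simp [add_assoc]

section Counting

open Finset
open scoped Classical

noncomputable def countWords (P : List Bool → Prop) (n : ℕ) : ℕ := #((words n).filter P)

theorem countWords_zero (P : List Bool → Prop) : countWords P 0 = if P [] then 1 else 0 := by
  by_cases h : P [] <;> simp [countWords, words, Finset.filter_singleton, h]

theorem countWords_succ (P : List Bool → Prop) (n : ℕ) :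
    countWords P (n + 1) =
      countWords (fun w => P (false :: w)) n + countWords (fun w => P (true :: w)) n := by
  rw [countWords, words, Finset.filter_union, Finset.filter_map, Finset.filter_map,
    card_union_of_disjoint, card_map, card_map]
  · rfl
  · exact disjoint_left.2 (by simp; rintro _ _ - - rfl _ - - ⟨⟩)

theorem countWords_add_countWords_not (P : List Bool → Prop) (n : ℕ) :
    countWords P n + countWords (fun w => ¬ P w) n = 2 ^ n := by
  induction n generalizing P with
  | zero => by_cases h : P [] <;> simp [countWords_zero, h]
  | succ n ih =>
    have h₀ := ih (fun w => P (false :: w))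
    have h₁ := ih (fun w => P (true :: w))
    rw [countWords_succ, countWords_succ, pow_succ]
    omega

theorem countWords_and_add_countWords_and_not (P Q : List Bool → Prop) (n : ℕ) :
    countWords (fun w => P w ∧ Q w) n + countWords (fun w => P w ∧ ¬ Q w) n = countWords P n := by
  have := card_filter_add_card_filter_not (s := (words n).filter P) Q
  rw [Finset.filter_filter, Finset.filter_filter] at this
  unfold countWords
  convert this

theorem countWords_comp {e : List Bool → List Bool} (he : Function.Involutive e)
    (hlen : ∀ w, (e w).length = w.length) (P : List Bool → Prop) (n : ℕ) :
    countWords (fun w => P (e w)) n = countWords P n :=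
  card_nbij' e e (fun w hw => by simp_all [mem_words]) (fun w hw => by simp_all [mem_words, he w])
    (fun w _ => he w) (fun w _ => he w)

theorem countWords_eq_fib {P : List Bool → Prop} {b : Bool} (h₀ : ∀ u, P (false :: u) ↔ P u)
    (h₁ : ∀ u, P (true :: b :: u) ↔ P u) (h₂ : ∀ u, ¬ P (true :: (!b) :: u)) {k : ℕ}
    (hk₀ : countWords P 0 = Nat.fib k) (hk₁ : countWords P 1 = Nat.fib (k + 1)) :
    ∀ n, countWords P n = Nat.fib (n + k)
  | 0 => by simpa
  | 1 => by simpa [add_comm]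
  | n + 2 => by
    have hrec : countWords P (n + 2) = countWords P (n + 1) + countWords P n := by
      rw [countWords_succ, countWords_succ (fun w => P (true :: w))]
      cases b <;> simp_all [countWords]
    rw [hrec, countWords_eq_fib h₀ h₁ h₂ hk₀ hk₁ (n + 1), countWords_eq_fib h₀ h₁ h₂ hk₀ hk₁ n,
      show n + 2 + k = n + k + 2 by ring, Nat.fib_add_two, add_right_comm, add_comm]

theorem countWords_factors (b : Bool) (n : ℕ) : countWords (Factors b) n = Nat.fib (n + 1) :=
  countWords_eq_fib (b := b) (by simp) (by simp) (by simp)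
    (by simp [countWords_zero, Factors.nil])
    (by cases b <;> simp [countWords_succ, countWords_zero, Factors.nil]) n

theorem countWords_factors_append_false (n : ℕ) :
    countWords (fun w => Factors false (w ++ [false])) n = Nat.fib (n + 2) :=
  countWords_eq_fib (b := false) (by simp) (by simp) (by simp)
    (by simp [countWords_zero, Factors.nil])
    (by simp [countWords_succ, countWords_zero, Factors.nil, Nat.fib_add_two]) n

theorem countWords_not_factors_true_and_false_notMem (n : ℕ) :
    countWords (fun w => ¬ Factors true w ∧ false ∉ w) n = n % 2 := by
  have : countWords (fun w => ¬ Factors true w ∧ false ∉ w) n =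
      #(({replicate n true} : Finset _).filter (fun _ => ¬ Even n)) := by
    unfold countWords
    congr 1
    ext w
    simp only [Finset.mem_filter, mem_words, Finset.mem_singleton]
    constructor
    · rintro ⟨rfl, hw, hf⟩
      have hrep : w = replicate w.length true := eq_replicate_iff.2 ⟨rfl, by simpa using hf⟩
      rw [hrep, Factors.replicate_true_iff] at hw
      exact ⟨hrep, hw⟩
    · rintro ⟨rfl, hn⟩
      simp [Factors.replicate_true_iff, hn]
  rw [this, Finset.filter_singleton]
  split_ifs with h <;> simp [Nat.even_iff] at h ⊢ <;> omega

theorem natCard_eq_sum_countWords (Q : Bool → List Bool → List Bool → Prop) (a c : ℕ) :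
    Nat.card {T : Bool × List Bool × List Bool //
        T.2.1.length = a ∧ T.2.2.length = c ∧ Q T.1 T.2.1 T.2.2} =
      ∑ x : Bool, ∑ v ∈ words a, countWords (Q x v) c := by
  rw [Nat.card_congr (Equiv.subtypeEquivRight (q := fun T => T ∈
      (univ ×ˢ words a ×ˢ words c).filter (fun T => Q T.1 T.2.1 T.2.2))
      (by simp [mem_words, and_assoc])), Nat.card_eq_fintype_card, Fintype.card_coe, card_filter]
  simp only [sum_product, countWords, card_filter]

theorem countWords_isUDCode_true (v : List Bool) (c : ℕ) :
    countWords (fun w => IsUDCode ![[true], v, w]) c =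
      countWords (fun w => IsUDCode ![[false], v.map not, w]) c := by
  rw [← countWords_comp (e := List.map not) (P := fun w => IsUDCode ![[false], v.map not, w])
    (fun w => by simp [Function.comp_def]) (fun w => length_map _)]
  congr 1
  funext w
  rw [← isUDCode_map_iff Bool.not_injective, ← FinVec.map_eq]
  rfl

theorem countWords_isUDCode_zero_zeroOne (c : ℕ) :
    countWords (fun w => IsUDCode ![[false], [false, true], w]) c =
      countWords (fun w => IsUDCode ![[false], [true, false], w]) c := by
  rw [← countWords_comp (P := fun w => IsUDCode ![[false], [true, false], w])
    reverse_involutive (fun w => length_reverse)]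
  congr 1
  funext w
  rw [← isUDCode_reverse_iff, ← FinVec.map_eq]
  rfl

theorem countWords_isUDCode_zero_zeroZero (c : ℕ) :
    countWords (fun w => IsUDCode ![[false], [false, false], w]) c = 0 := by
  simp [countWords, not_isUDCode_zero_zeroZero]

theorem countWords_isUDCode_zero_oneZero (c : ℕ) :
    countWords (fun w => IsUDCode ![[false], [true, false], w]) c + Nat.fib (c + 2) = 2 ^ c := by
  simpa [isUDCode_zero_oneZero_iff, countWords_factors_append_false, add_comm] using
    countWords_add_countWords_not (fun w => Factors false (w ++ [false])) c

theorem countWords_isUDCode_zero_oneOne (c : ℕ) :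
    countWords (fun w => IsUDCode ![[false], [true, true], w]) c + Nat.fib (c + 1) + c % 2 =
      2 ^ c := by
  have h₁ := countWords_add_countWords_not (Factors true) c
  have h₂ := countWords_and_add_countWords_and_not (fun w => ¬ Factors true w) (false ∈ ·) c
  rw [countWords_not_factors_true_and_false_notMem] at h₂
  rw [countWords_factors] at h₁
  simp only [isUDCode_zero_oneOne_iff]
  omega

end Counting

theorem count_ud_one_two_c_general (c : ℕ) :
    (Nat.card {T : Bool × List Bool × List Bool //
        T.2.1.length = 2 ∧ T.2.2.length = c ∧
        IsUDCode ![[T.1], T.2.1, T.2.2]} : ℤ) =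
      3 * 2 ^ (c + 1) - 2 * Nat.fib (c + 4) - 2 * (c % 2) := by
  have h₁₀ := countWords_isUDCode_zero_oneZero c
  have h₁₁ := countWords_isUDCode_zero_oneOne c
  have hfib₄ : Nat.fib (c + 4) = Nat.fib (c + 2) + Nat.fib (c + 3) := Nat.fib_add_two
  have hfib₃ : Nat.fib (c + 3) = Nat.fib (c + 1) + Nat.fib (c + 2) := Nat.fib_add_two
  rw [natCard_eq_sum_countWords (fun x v w => IsUDCode ![[x], v, w]), Fintype.sum_bool,
    sum_words_two, sum_words_two]
  simp only [map_cons, map_nil, Bool.not_false, Bool.not_true, countWords_isUDCode_true,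
    countWords_isUDCode_zero_zeroOne, countWords_isUDCode_zero_zeroZero]
  zify at h₁₀ h₁₁ hfib₄ hfib₃
  push_cast
  linarith [pow_succ (2 : ℤ) c]

theorem count_ud_one_two_c (c : ℕ) (hc : 1 ≤ c) :
    (Nat.card {T : Bool × List Bool × List Bool //
        T.2.1.length = 2 ∧ T.2.2.length = c ∧
        IsUDCode ![[T.1], T.2.1, T.2.2]} : ℤ) =
      3 * 2 ^ (c + 1) - 2 * Nat.fib (c + 4) - 2 * (c % 2) :=
  count_ud_one_two_c_general c
end

section
/- Let n ≥ 2 and let a ≤ b ≤ c be natural numbers with n^{-a} + n^{-b} + n^{-c} ≤ 1 (the Kraft inequality, ensuring codes exist). Then the number of prefix codes with length distribution (a,b,c) over an n-letter alphabet divided by the number of uniquely decodable codes with length distribution (a,b,c) is strictly greater than α_n, where α_2 = 1/6 and α_n = (n−2)/n for n > 2. -/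
open Finset

section Codes

variable {X : Type*} {m : ℕ} {C : Fin m → List X}

theorem IsPrefixCode.ne_nil (hm : 1 < m) (h : IsPrefixCode C) (i : Fin m) : C i ≠ [] := by
  intro hi
  have : Nontrivial (Fin m) := Fin.nontrivial_iff_two_le.mpr hm
  obtain ⟨j, hj⟩ := exists_ne i
  exact hj (h i j (hi ▸ List.nil_prefix)).symm

theorem IsPrefixCode.isUDCode_s16 (hm : 1 < m) (h : IsPrefixCode C) : IsUDCode C := by
  intro l₁
  induction l₁ with
  | nil =>
    rintro (_ | ⟨j, s⟩) hl
    · rfl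
    · simp [h.ne_nil hm] at hl
  | cons i t ih =>
    rintro (_ | ⟨j, s⟩) hl
    · simp [h.ne_nil hm] at hl
    simp only [List.map_cons, List.flatten_cons] at hl
    obtain rfl : i = j := by
      rcases List.prefix_or_prefix_of_prefix (hl ▸ List.prefix_append _ _)
          (List.prefix_append _ _) with hij | hji
      · exact h i j hij
      · exact (h j i hji).symm
    rw [ih s (List.append_cancel_left hl)]

theorem IsUDCode.append_ne_append (h : IsUDCode C) {i j : Fin m} (hij : i ≠ j) :
    C i ++ C j ≠ C j ++ C i := fun hc =>
  hij (List.cons.inj (h [i, j] [j, i] (by simpa using hc))).1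

theorem isPrefixCode_triple_iff {w v u : List X} (hwv : w.length ≤ v.length)
    (hvu : v.length ≤ u.length) :
    IsPrefixCode ![w, v, u] ↔ ¬w <+: v ∧ ¬w <+: u ∧ ¬v <+: u := by
  have swap {x y : List X} (hxy : x.length ≤ y.length) (h : y <+: x) : x <+: y :=
    h.eq_of_length (by have := h.length_le; omega) ▸ List.prefix_rfl
  constructor
  · intro h
    exact ⟨fun h' => absurd (h 0 1 h') (by decide), fun h' => absurd (h 0 2 h') (by decide),
      fun h' => absurd (h 1 2 h') (by decide)⟩
  · rintro ⟨hwv', hwu', hvu'⟩ i j hij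
    fin_cases i <;> fin_cases j <;> simp_all
    exact hwu' (swap (hwv.trans hvu) hij)

theorem not_isUDCode_replicate_replicate_left (x : X) (a b : ℕ) (u : List X) :
    ¬IsUDCode ![List.replicate a x, List.replicate b x, u] := fun h =>
  h.append_ne_append (i := 0) (j := 1) (by decide) (by simp [add_comm])

theorem not_isUDCode_replicate_replicate_outer (x : X) (a c : ℕ) (v : List X) :
    ¬IsUDCode ![List.replicate a x, v, List.replicate c x] := fun h =>
  h.append_ne_append (i := 0) (j := 2) (by decide) (by simp [add_comm])

end Codes

theorem Finset.card_filter_product_eq_sum {β γ : Type*} (s : Finset β) (t : Finset γ)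
    (p : β → γ → Prop) [∀ x, DecidablePred (p x)] :
    #{x ∈ s ×ˢ t | p x.1 x.2} = ∑ x ∈ s, #{y ∈ t | p x y} := by
  simp only [card_filter, sum_product]

section Words

variable (α : Type*) [Fintype α]

def wordsOfLength (L : ℕ) : Finset (List α) :=
  (univ : Finset (List.Vector α L)).map ⟨List.Vector.toList, List.Vector.toList_injective⟩

variable {α}

@[simp]
theorem mem_wordsOfLength {L : ℕ} {l : List α} : l ∈ wordsOfLength α L ↔ l.length = L := by
  simp only [wordsOfLength, Finset.mem_map, mem_univ, true_and, Function.Embedding.coeFn_mk]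
  exact ⟨fun ⟨v, hv⟩ => hv ▸ v.toList_length, fun h => ⟨⟨l, h⟩, rfl⟩⟩

theorem card_wordsOfLength (L : ℕ) : #(wordsOfLength α L) = Fintype.card α ^ L := by
  rw [wordsOfLength, card_map, card_univ, card_vector]

theorem natCard_lengths_eq_card_filter (Q : List α × List α × List α → Prop) [DecidablePred Q]
    (a b c : ℕ) :
    Nat.card {T : List α × List α × List α //
        T.1.length = a ∧ T.2.1.length = b ∧ T.2.2.length = c ∧ Q T} =
      #{T ∈ wordsOfLength α a ×ˢ wordsOfLength α b ×ˢ wordsOfLength α c | Q T} := by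
  rw [← Nat.card_eq_finsetCard]
  exact Nat.card_congr (Equiv.subtypeEquivRight fun T => by simp [and_assoc])

open scoped Classical in
theorem card_filter_isUDCode_triples_add_le [Nontrivial α] {a b c : ℕ} (ha : a ≠ 0)
    (hb : b ≠ 0) :
    #{T ∈ wordsOfLength α a ×ˢ wordsOfLength α b ×ˢ wordsOfLength α c |
        IsUDCode ![T.1, T.2.1, T.2.2]} + (Fintype.card α ^ (c + 1) + 1) ≤
      Fintype.card α ^ a * Fintype.card α ^ b * Fintype.card α ^ c := by
  obtain ⟨x₀, x₁, hx⟩ := exists_pair_ne α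
  set S := wordsOfLength α a ×ˢ wordsOfLength α b ×ˢ wordsOfLength α c
  let f (p : α × List α) : List α × List α × List α :=
    (List.replicate a p.1, List.replicate b p.1, p.2)
  let e : List α × List α × List α :=
    (List.replicate a x₀, List.replicate (b - 1) x₀ ++ [x₁], List.replicate c x₀)
  have hf : Function.Injective f := fun p p' h =>
    Prod.ext (List.replicate_right_injective ha (congrArg Prod.fst h)) (congrArg (·.2.2) h)
  have he : e ∉ (univ ×ˢ wordsOfLength α c).image f := by
    simp only [e, f, Finset.mem_image, Prod.mk.injEq, not_exists, not_and]
    rintro ⟨x, u⟩ - h₀ h₁ -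
    have hx₁ : x₁ = x := List.eq_of_mem_replicate (by rw [h₁]; simp)
    exact hx ((List.replicate_right_injective ha h₀).symm.trans hx₁.symm)
  have hnotUD : insert e ((univ ×ˢ wordsOfLength α c).image f) ⊆
      {T ∈ S | ¬IsUDCode ![T.1, T.2.1, T.2.2]} := by
    intro T hT
    rw [Finset.mem_insert, Finset.mem_image] at hT
    rcases hT with rfl | ⟨⟨x, u⟩, hu, rfl⟩
    · exact Finset.mem_filter.mpr
        ⟨by simp [S, e]; omega, not_isUDCode_replicate_replicate_outer _ _ _ _⟩
    · exact Finset.mem_filter.mpr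
        ⟨by simp_all [S, f], not_isUDCode_replicate_replicate_left _ _ _ _⟩
  calc _ = #{T ∈ S | IsUDCode ![T.1, T.2.1, T.2.2]} +
        #(insert e ((univ ×ˢ wordsOfLength α c).image f)) := by
        rw [card_insert_of_notMem he, card_image_of_injective _ hf, card_product, card_univ,
          card_wordsOfLength, pow_succ']
    _ ≤ #{T ∈ S | IsUDCode ![T.1, T.2.1, T.2.2]} +
        #{T ∈ S | ¬IsUDCode ![T.1, T.2.1, T.2.2]} := by
        gcongr
    _ = _ := by
        rw [card_filter_add_card_filter_not, card_product, card_product, card_wordsOfLength,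
          card_wordsOfLength, card_wordsOfLength, mul_assoc]

variable [DecidableEq α]

theorem card_wordsOfLength_filter_prefix {w : List α} {L : ℕ} (hw : w.length ≤ L) :
    #{u ∈ wordsOfLength α L | w <+: u} = Fintype.card α ^ (L - w.length) := by
  have : {u ∈ wordsOfLength α L | w <+: u} =
      (wordsOfLength α (L - w.length)).image (w ++ ·) := by
    ext u
    simp only [Finset.mem_filter, mem_wordsOfLength, Finset.mem_image]
    constructor
    · rintro ⟨hu, s, rfl⟩
      exact ⟨s, by simp at hu; omega, rfl⟩
    · rintro ⟨s, hs, rfl⟩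
      exact ⟨by simp; omega, List.prefix_append _ _⟩
  rw [this, card_image_of_injective _ (List.append_right_injective w), card_wordsOfLength]

theorem card_wordsOfLength_filter_not_prefix_add {w : List α} {L : ℕ} (hw : w.length ≤ L) :
    #{u ∈ wordsOfLength α L | ¬w <+: u} + Fintype.card α ^ (L - w.length) =
      Fintype.card α ^ L := by
  rw [← card_wordsOfLength_filter_prefix hw, add_comm, card_filter_add_card_filter_not,
    card_wordsOfLength]

theorem card_wordsOfLength_filter_not_prefix_not_prefix_add {w v : List α} {L : ℕ}
    (hwv : ¬w <+: v) (hlen : w.length ≤ v.length) (hv : v.length ≤ L) :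
    #{u ∈ wordsOfLength α L | ¬w <+: u ∧ ¬v <+: u} + Fintype.card α ^ (L - w.length) +
      Fintype.card α ^ (L - v.length) = Fintype.card α ^ L := by
  have hdisj : Disjoint {u ∈ wordsOfLength α L | w <+: u} {u ∈ wordsOfLength α L | v <+: u} :=
    disjoint_filter.mpr fun _ _ hw hv => hwv (List.prefix_of_prefix_length_le hw hv hlen)
  rw [← card_wordsOfLength_filter_prefix (hlen.trans hv), ← card_wordsOfLength_filter_prefix hv,
    add_assoc, ← card_union_of_disjoint hdisj, ← filter_or, add_comm]
  simp only [← not_or]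
  rw [card_filter_add_card_filter_not, card_wordsOfLength]

theorem card_filter_prefixFree_pairs {w : List α} {b c : ℕ} (hwb : w.length ≤ b) (hbc : b ≤ c) :
    (#{vu ∈ wordsOfLength α b ×ˢ wordsOfLength α c |
        ¬w <+: vu.1 ∧ ¬w <+: vu.2 ∧ ¬vu.1 <+: vu.2} : ℝ) =
      (Fintype.card α ^ b - Fintype.card α ^ (b - w.length)) *
        (Fintype.card α ^ c - Fintype.card α ^ (c - w.length) - Fintype.card α ^ (c - b)) := by
  set q := Fintype.card α
  have hv : (#{v ∈ wordsOfLength α b | ¬w <+: v} : ℝ) = q ^ b - q ^ (b - w.length) := by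
    rw [eq_sub_iff_add_eq]
    exact_mod_cast card_wordsOfLength_filter_not_prefix_add hwb
  rw [card_filter_product_eq_sum _ _ (fun v u => ¬w <+: v ∧ ¬w <+: u ∧ ¬v <+: u),
    Nat.cast_sum, ← hv, card_eq_sum_ones, Nat.cast_sum, sum_filter, sum_mul]
  refine sum_congr rfl fun v hvb => ?_
  rw [mem_wordsOfLength] at hvb
  split_ifs with hwv
  · simp [hwv]
  · have hu := card_wordsOfLength_filter_not_prefix_not_prefix_add hwv (hvb ▸ hwb) (hvb ▸ hbc)
    rw [hvb] at hu
    simp only [hwv, not_false_eq_true, true_and, Nat.cast_one, one_mul]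
    rw [sub_sub, eq_sub_iff_add_eq, ← add_assoc]
    exact_mod_cast hu

open scoped Classical in
theorem card_filter_isPrefixCode_triples {a b c : ℕ} (hab : a ≤ b) (hbc : b ≤ c) :
    (#{T ∈ wordsOfLength α a ×ˢ wordsOfLength α b ×ˢ wordsOfLength α c |
        IsPrefixCode ![T.1, T.2.1, T.2.2]} : ℝ) =
      Fintype.card α ^ a * (Fintype.card α ^ b - Fintype.card α ^ (b - a)) *
        (Fintype.card α ^ c - Fintype.card α ^ (c - a) - Fintype.card α ^ (c - b)) := by
  rw [filter_congr fun T hT => by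
      simp only [Finset.mem_product, mem_wordsOfLength] at hT
      exact isPrefixCode_triple_iff (by omega) (by omega),
    card_filter_product_eq_sum _ _
      (fun w (vu : List α × List α) => ¬w <+: vu.1 ∧ ¬w <+: vu.2 ∧ ¬vu.1 <+: vu.2),
    Nat.cast_sum, sum_congr rfl fun w hw => by
      rw [card_filter_prefixFree_pairs (mem_wordsOfLength.mp hw ▸ hab) hbc,
        mem_wordsOfLength.mp hw],
    sum_const, card_wordsOfLength, nsmul_eq_mul, mul_assoc]
  push_cast
  ring

end Words

theorem inv_pow_add_inv_pow_lt_one_of_kraft {n a b c : ℕ} (hn : 0 < n)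
    (hkraft : (1 : ℝ) / n ^ a + 1 / n ^ b + 1 / n ^ c ≤ 1) :
    ((n : ℝ) ^ a)⁻¹ + ((n : ℝ) ^ b)⁻¹ < 1 := by
  have : 0 < ((n : ℝ) ^ c)⁻¹ := by positivity
  simp only [one_div] at hkraft
  linarith

theorem ne_zero_of_inv_pow_add_inv_pow_lt_one {n a b : ℕ} (hn : 0 < n)
    (h : ((n : ℝ) ^ a)⁻¹ + ((n : ℝ) ^ b)⁻¹ < 1) : a ≠ 0 := by
  rintro rfl
  have : 0 < ((n : ℝ) ^ b)⁻¹ := by positivity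
  simp only [pow_zero, inv_one] at h
  linarith

noncomputable def alpha (n : ℕ) : ℝ := if n = 2 then 1 / 6 else ((n : ℝ) - 2) / n

theorem alpha_pos {n : ℕ} (hn : 2 ≤ n) : 0 < alpha n := by
  unfold alpha
  split_ifs with h2
  · norm_num
  · have : (3 : ℝ) ≤ n := by exact_mod_cast (show 3 ≤ n by omega)
    exact div_pos (by linarith) (by linarith)

theorem alpha_mul_one_sub_le {n : ℕ} {x y : ℝ} (hn : 2 ≤ n) (hy : 0 < y) (hxn : x * n ≤ 1)
    (hyx : y = x ∨ y * n ≤ x) (hx2 : n = 2 → x = 1 / 2 ∨ x ≤ 1 / 4) (hxy : x + y < 1) :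
    alpha n * (1 - n * x * y) ≤ (1 - x) * (1 - x - y) := by
  rcases eq_or_ne n 2 with rfl | hn2
  · simp only [alpha, if_pos]
    push_cast at hxn hyx ⊢
    rcases hx2 rfl with hx2 | hx2 <;> rcases hyx with hyx | hyx <;> nlinarith
  · have hn3 : (3 : ℝ) ≤ n := by exact_mod_cast (show 3 ≤ n by omega)
    have hx : 0 < x := by rcases hyx with hyx | hyx <;> nlinarith
    simp only [alpha, if_neg hn2]
    rw [div_mul_eq_mul_div, div_le_iff₀ (by linarith)]
    rcases hyx with rfl | hyx
    · nlinarith [mul_nonneg (by nlinarith : (0 : ℝ) ≤ 1 - y * n) (by nlinarith : (0 : ℝ) ≤ 2 - y * n)]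
    · nlinarith [mul_nonneg (by nlinarith : (0 : ℝ) ≤ 1 - x * n) (by linarith : (0 : ℝ) ≤ 2 - x),
        mul_nonneg (mul_nonneg (by nlinarith : (0 : ℝ) ≤ (n : ℝ) * n - n) hx.le) hy.le]

theorem alpha_mul_le_density {n a b : ℕ} (hn : 2 ≤ n) (ha : a ≠ 0) (hab : a ≤ b)
    (hxy : ((n : ℝ) ^ a)⁻¹ + ((n : ℝ) ^ b)⁻¹ < 1) :
    alpha n * (1 - n * ((n : ℝ) ^ a)⁻¹ * ((n : ℝ) ^ b)⁻¹) ≤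
      (1 - ((n : ℝ) ^ a)⁻¹) * (1 - ((n : ℝ) ^ a)⁻¹ - ((n : ℝ) ^ b)⁻¹) := by
  have hn1 : (1 : ℝ) ≤ n := by exact_mod_cast (show 1 ≤ n by omega)
  obtain ⟨a, rfl⟩ := Nat.exists_eq_add_of_le' (Nat.one_le_iff_ne_zero.mpr ha)
  obtain ⟨d, rfl⟩ := Nat.exists_eq_add_of_le hab
  refine alpha_mul_one_sub_le hn (by positivity) ?_ ?_ ?_ hxy
  · rw [pow_succ, mul_inv, inv_mul_cancel_right₀ (by positivity)]
    exact inv_le_one_of_one_le₀ (one_le_pow₀ hn1)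
  · rcases d with _ | d
    · exact Or.inl rfl
    · right
      rw [pow_add, mul_inv, mul_assoc]
      refine mul_le_of_le_one_right (by positivity) ?_
      rw [pow_succ, mul_inv, inv_mul_cancel_right₀ (by positivity)]
      exact inv_le_one_of_one_le₀ (one_le_pow₀ hn1)
  · -- For `n = 2` the bound fails at `y = x ∈ (1/4, 1/2)`; here `x` is a power of `1/2`.
    rintro rfl
    rcases a with _ | a
    · left
      norm_num
    · right
      rw [inv_le_comm₀ (by positivity) (by norm_num)]
      calc ((1 : ℝ) / 4)⁻¹ = 2 ^ 2 := by norm_num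
        _ ≤ 2 ^ (a + 1 + 1) := pow_le_pow_right₀ (by norm_num) (by omega)

theorem alpha_mul_le {n a b c : ℕ} (hn : 2 ≤ n) (ha : a ≠ 0) (hab : a ≤ b) (hbc : b ≤ c)
    (hxy : ((n : ℝ) ^ a)⁻¹ + ((n : ℝ) ^ b)⁻¹ < 1) :
    alpha n * ((n : ℝ) ^ a * n ^ b * n ^ c - n ^ (c + 1)) ≤
      (n : ℝ) ^ a * (n ^ b - n ^ (b - a)) * (n ^ c - n ^ (c - a) - n ^ (c - b)) := by
  have hn0 : (n : ℝ) ≠ 0 := by positivity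
  rw [pow_sub₀ _ hn0 hab, pow_sub₀ _ hn0 (hab.trans hbc), pow_sub₀ _ hn0 hbc, pow_succ]
  have h := mul_le_mul_of_nonneg_left (alpha_mul_le_density hn ha hab hxy)
    (by positivity : (0 : ℝ) ≤ n ^ a * n ^ b * n ^ c)
  refine Eq.trans_le ?_ (h.trans_eq ?_) <;> field_simp

theorem prefix_ratio_gt_alpha (n a b c : ℕ) (hn : 2 ≤ n) (hab : a ≤ b) (hbc : b ≤ c)
    (hkraft : (1 : ℝ) / n ^ a + 1 / n ^ b + 1 / n ^ c ≤ 1) :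
    (Nat.card {T : List (Fin n) × List (Fin n) × List (Fin n) //
        T.1.length = a ∧ T.2.1.length = b ∧ T.2.2.length = c ∧
        IsPrefixCode ![T.1, T.2.1, T.2.2]} : ℝ) /
      (Nat.card {T : List (Fin n) × List (Fin n) × List (Fin n) //
        T.1.length = a ∧ T.2.1.length = b ∧ T.2.2.length = c ∧
        IsUDCode ![T.1, T.2.1, T.2.2]} : ℝ) >
      (if n = 2 then 1 / 6 else ((n : ℝ) - 2) / n) := by
  classical
  have : Nontrivial (Fin n) := Fin.nontrivial_iff_two_le.mpr hn
  have hxy := inv_pow_add_inv_pow_lt_one_of_kraft (by omega) hkraft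
  have ha := ne_zero_of_inv_pow_add_inv_pow_lt_one (by omega) hxy
  rw [natCard_lengths_eq_card_filter (fun T => IsPrefixCode ![T.1, T.2.1, T.2.2]),
    natCard_lengths_eq_card_filter (fun T => IsUDCode ![T.1, T.2.1, T.2.2])]
  have hP := card_filter_isPrefixCode_triples (α := Fin n) hab hbc
  have hU := card_filter_isUDCode_triples_add_le (α := Fin n) (b := b) (c := c) ha (by omega)
  simp only [Fintype.card_fin] at hP hU
  set S := wordsOfLength (Fin n) a ×ˢ wordsOfLength (Fin n) b ×ˢ wordsOfLength (Fin n) c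
  have hUR : (#{T ∈ S | IsUDCode ![T.1, T.2.1, T.2.2]} : ℝ) + (n ^ (c + 1) + 1) ≤
      n ^ a * n ^ b * n ^ c := by exact_mod_cast hU
  have hPU : (#{T ∈ S | IsPrefixCode ![T.1, T.2.1, T.2.2]} : ℝ) ≤
      #{T ∈ S | IsUDCode ![T.1, T.2.1, T.2.2]} := by
    exact_mod_cast card_le_card
      (monotone_filter_right _ fun T _ (h : IsPrefixCode _) => h.isUDCode_s16 (by norm_num))
  have hα := alpha_mul_le hn ha hab hbc hxy
  have hα0 := alpha_pos hn
  have hU0 : (0 : ℝ) < #{T ∈ S | IsUDCode ![T.1, T.2.1, T.2.2]} := by nlinarith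
  change _ > alpha n
  rw [gt_iff_lt, lt_div_iff₀ hU0]
  nlinarith
end

section
/- For every n ≥ 2 and natural numbers a, b ≥ 1, the number of uniquely decodable codes (pairs of words) with length distribution (a,b) over an n-letter alphabet equals n^{a+b} − n^{gcd(a,b)}. -/
open List Computability

section

variable {α : Type*}

namespace Language

theorem pair_comm (x y : List α) : ({x, y} : Language α) = {y, x} :=
  Set.pair_comm x y

theorem kstar_pair_append_le (x p : List α) :
    ({x, x ++ p} : Language α)∗ ≤ ({x, p} : Language α)∗ := by
  refine (kstar_mono ?_).trans (kstar_idem _).le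
  have hp : p ∈ ({x, p} : Language α)∗ := le_kstar (a := ({x, p} : Language α)) (Or.inr rfl)
  rintro w (hw | hw) <;> subst w
  · exact le_kstar (a := ({x, p} : Language α)) (Or.inl rfl)
  · exact mul_kstar_le_kstar (a := ({x, p} : Language α)) (append_mem_mul (Or.inl rfl) hp)

theorem eq_nil_or_exists_append_of_mem_kstar_pair_append {x p A : List α}
    (hA : A ∈ ({x, x ++ p} : Language α)∗) :
    A = [] ∨ ∃ A' ∈ ({x, p} : Language α)∗, A = x ++ A' := by
  obtain ⟨_ | ⟨c, L⟩, rfl, hL⟩ := hA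
  · exact Or.inl rfl
  have hL' : L.flatten ∈ ({x, p} : Language α)∗ :=
    kstar_pair_append_le x p (join_mem_kstar fun w hw ↦ hL w (mem_cons_of_mem c hw))
  right
  rcases hL c mem_cons_self with rfl | rfl
  · exact ⟨L.flatten, hL', rfl⟩
  · refine ⟨p ++ L.flatten, ?_, by simp⟩
    exact mul_kstar_le_kstar (a := ({x, p} : Language α)) (append_mem_mul (Or.inr rfl) hL')

end Language

namespace List

theorem append_comm_of_append_eq_append_of_mem_kstar {x y A B : List α}
    (hA : A ∈ ({x, y} : Language α)∗) (hB : B ∈ ({x, y} : Language α)∗)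
    (h : x ++ A = y ++ B) : x ++ y = y ++ x := by
  induction hn : x.length + y.length using Nat.strong_induction_on generalizing x y A B with
  | _ n ih =>
  wlog hxy : x.length ≤ y.length generalizing x y A B
  · rw [Language.pair_comm] at hA hB
    exact (this hB hA h.symm (by omega) (by omega)).symm
  rcases eq_or_ne x [] with rfl | hx
  · simp
  obtain ⟨p, rfl⟩ : x <+: y :=
    prefix_of_prefix_length_le (h ▸ prefix_append x A) (prefix_append y B) hxy
  rcases Language.eq_nil_or_exists_append_of_mem_kstar_pair_append hA with rfl | ⟨A', hA', rfl⟩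
  · simp_all
  have hxp : x ++ p = p ++ x :=
    ih (x.length + p.length) (by simp [← hn, length_pos_iff.mpr hx]) hA'
      (Language.kstar_pair_append_le x p hB) (by simpa using h) rfl
  simp [← append_assoc, hxp]

theorem flatten_map_pair_mem_kstar (x y : List α) (l : List (Fin 2)) :
    (l.map ![x, y]).flatten ∈ ({x, y} : Language α)∗ := by
  refine Language.join_mem_kstar fun w hw ↦ ?_
  obtain ⟨i, -, rfl⟩ := mem_map.mp hw
  fin_cases i
  exacts [Or.inl rfl, Or.inr rfl]

theorem append_comm_of_pair_eq_nil {x y : List α} {i : Fin 2} (h : ![x, y] i = []) :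
    x ++ y = y ++ x := by
  fin_cases i <;> simp_all

theorem append_comm_of_flatten_map_pair_eq {x y : List α} {l₁ l₂ : List (Fin 2)}
    (h : (l₁.map ![x, y]).flatten = (l₂.map ![x, y]).flatten) (hne : l₁ ≠ l₂) :
    x ++ y = y ++ x := by
  induction l₁ generalizing l₂ with
  | nil =>
    obtain _ | ⟨j, _⟩ := l₂
    · exact absurd rfl hne
    · exact append_comm_of_pair_eq_nil (append_eq_nil_iff.mp (h.symm.trans flatten_nil)).1
  | cons i t₁ ih =>
    obtain _ | ⟨j, t₂⟩ := l₂
    · exact append_comm_of_pair_eq_nil (append_eq_nil_iff.mp (h.trans flatten_nil)).1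
    simp only [map_cons, flatten_cons] at h
    by_cases hij : i = j
    · subst hij
      exact ih (append_cancel_left h) fun ht ↦ hne (ht ▸ rfl)
    have hA := flatten_map_pair_mem_kstar x y t₁
    have hB := flatten_map_pair_mem_kstar x y t₂
    fin_cases i <;> fin_cases j <;> simp at hij h
    · exact append_comm_of_append_eq_append_of_mem_kstar hA hB h
    · rw [Language.pair_comm] at hA hB
      exact (append_comm_of_append_eq_append_of_mem_kstar hA hB h).symm

theorem exists_eq_flatten_replicate_of_append_comm {x y : List α} (h : x ++ y = y ++ x) :
    ∃ z : List α, z.length = Nat.gcd x.length y.length ∧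
      ∃ k l, x = (replicate k z).flatten ∧ y = (replicate l z).flatten := by
  induction hn : x.length + y.length using Nat.strong_induction_on generalizing x y with
  | _ n ih =>
  wlog hxy : x.length ≤ y.length generalizing x y
  · obtain ⟨z, hz, k, l, rfl, rfl⟩ := this h.symm (by omega) (by omega)
    exact ⟨z, by rw [hz, Nat.gcd_comm], l, k, rfl, rfl⟩
  rcases eq_or_ne x [] with rfl | hx
  · exact ⟨y, by simp, 0, 1, by simp, by simp⟩
  obtain ⟨u, rfl⟩ : x <+: y :=
    prefix_of_prefix_length_le (h ▸ prefix_append x y) (prefix_append y x) hxy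
  obtain ⟨z, hz, k, l, rfl, rfl⟩ :=
    ih (x.length + u.length) (by simp [← hn, length_pos_iff.mpr hx]) (by simpa using h) rfl
  refine ⟨z, ?_, k, k + l, rfl, by rw [replicate_add, flatten_append]⟩
  rw [hz, length_append, Nat.add_comm, Nat.gcd_add_self_right]

theorem flatten_replicate_eq_div_length (z : List α) (k : ℕ) :
    (replicate k z).flatten =
      (replicate ((replicate k z).flatten.length / z.length) z).flatten := by
  rcases eq_or_ne z [] with rfl | hz
  · simp
  · simp [Nat.mul_div_cancel _ (length_pos_iff.mpr hz)]

theorem take_length_flatten_replicate (z : List α) {k : ℕ} (hk : k ≠ 0) :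
    (replicate k z).flatten.take z.length = z := by
  obtain ⟨k, rfl⟩ := Nat.exists_eq_succ_of_ne_zero hk
  simp [replicate_succ]

end List

theorem isUDCode_pair_iff {x y : List α} : IsUDCode ![x, y] ↔ x ++ y ≠ y ++ x := by
  refine ⟨fun hud hxy ↦ ?_, fun hxy l₁ l₂ h ↦ ?_⟩
  · simpa using hud [0, 1] [1, 0] (by simp [hxy])
  · by_contra hne
    exact hxy (append_comm_of_flatten_map_pair_eq h hne)

theorem Nat.card_subtype_and_not {β : Type*} (P Q : β → Prop) [Finite {x // P x}] :
    Nat.card {x // P x ∧ ¬Q x} = Nat.card {x // P x} - Nat.card {x // P x ∧ Q x} := by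
  classical
  have := Fintype.ofFinite {x // P x}
  rw [← Nat.card_congr (Equiv.subtypeSubtypeEquivSubtypeInter P (¬Q ·)),
    ← Nat.card_congr (Equiv.subtypeSubtypeEquivSubtypeInter P Q)]
  simp only [Nat.card_eq_fintype_card]
  exact Fintype.card_subtype_compl _

section CountingPairs

variable (a b : ℕ)

theorem finite_pairs [Finite α] :
    Finite {p : List α × List α // p.1.length = a ∧ p.2.length = b} :=
  Finite.of_equiv (List.Vector α a × List.Vector α b) Equiv.subtypeProdEquivProd.symm

theorem card_pairs [Fintype α] :
    Nat.card {p : List α × List α // p.1.length = a ∧ p.2.length = b} =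
      Fintype.card α ^ (a + b) := by
  refine (Nat.card_congr (Equiv.subtypeProdEquivProd (p := fun x : List α ↦ x.length = a)
    (q := fun y : List α ↦ y.length = b))).trans ?_
  rw [Nat.card_prod]
  change Nat.card (List.Vector α a) * Nat.card (List.Vector α b) = _
  simp only [Nat.card_eq_fintype_card, card_vector, pow_add]

def rootPowers (z : List.Vector α (Nat.gcd a b)) :
    {p : List α × List α // p.1.length = a ∧ p.2.length = b ∧ p.1 ++ p.2 = p.2 ++ p.1} :=
  ⟨((replicate (a / Nat.gcd a b) z.1).flatten, (replicate (b / Nat.gcd a b) z.1).flatten),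
    by simp [z.2, Nat.div_mul_cancel (Nat.gcd_dvd_left a b)],
    by simp [z.2, Nat.div_mul_cancel (Nat.gcd_dvd_right a b)],
    by simp only [← flatten_append, ← replicate_add, Nat.add_comm]⟩

theorem rootPowers_injective : Function.Injective (rootPowers (α := α) a b) := by
  rintro ⟨z, hz⟩ ⟨z', hz'⟩ h
  simp only [rootPowers, Subtype.mk.injEq, Prod.mk.injEq] at h
  apply Subtype.ext
  rcases Nat.eq_zero_or_pos (Nat.gcd a b) with hg | hg
  · rw [hg] at hz hz'
    simp_all [eq_nil_of_length_eq_zero]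
  have of_dvd : ∀ c, Nat.gcd a b ∣ c → 0 < c → (replicate (c / Nat.gcd a b) z).flatten =
      (replicate (c / Nat.gcd a b) z').flatten → z = z' := by
    intro c hdvd hc hzz'
    have hk : c / Nat.gcd a b ≠ 0 := (Nat.div_pos (Nat.le_of_dvd hc hdvd) hg).ne'
    rw [← take_length_flatten_replicate z hk, ← take_length_flatten_replicate z' hk, hzz', hz, hz']
  rcases Nat.gcd_pos_iff.mp hg with ha | hb
  · exact of_dvd a (Nat.gcd_dvd_left a b) ha h.1
  · exact of_dvd b (Nat.gcd_dvd_right a b) hb h.2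

theorem rootPowers_surjective : Function.Surjective (rootPowers (α := α) a b) := by
  rintro ⟨⟨x, y⟩, rfl, rfl, h⟩
  obtain ⟨z, hz, k, l, rfl, rfl⟩ := exists_eq_flatten_replicate_of_append_comm h
  refine ⟨⟨z, hz⟩, Subtype.ext (Prod.ext ?_ ?_)⟩ <;> dsimp only [rootPowers] <;> rw [← hz]
  · exact (flatten_replicate_eq_div_length z k).symm
  · exact (flatten_replicate_eq_div_length z l).symm

theorem card_commuting_pairs [Fintype α] :
    Nat.card {p : List α × List α // p.1.length = a ∧ p.2.length = b ∧ p.1 ++ p.2 = p.2 ++ p.1} =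
      Fintype.card α ^ Nat.gcd a b := by
  rw [← Nat.card_congr (Equiv.ofBijective _ ⟨rootPowers_injective a b,
    rootPowers_surjective a b⟩), Nat.card_eq_fintype_card, card_vector]

end CountingPairs

end

theorem count_ud_pairs_general {X : Type*} [Fintype X] (n a b : ℕ)
    (hX : Fintype.card X = n) :
    Nat.card {p : List X × List X // p.1.length = a ∧ p.2.length = b ∧
        IsUDCode ![p.1, p.2]} = n ^ (a + b) - n ^ Nat.gcd a b := by
  have := finite_pairs (α := X) a b
  simp only [isUDCode_pair_iff, ← and_assoc]
  rw [Nat.card_subtype_and_not, card_pairs]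
  simp only [and_assoc]
  rw [card_commuting_pairs, hX]

theorem count_ud_pairs {X : Type*} [Fintype X] (n a b : ℕ) (hn : 2 ≤ n)
    (hX : Fintype.card X = n) (ha : 1 ≤ a) (hb : 1 ≤ b) :
    Nat.card {p : List X × List X // p.1.length = a ∧ p.2.length = b ∧
        IsUDCode ![p.1, p.2]} = n ^ (a + b) - n ^ Nat.gcd a b :=
  count_ud_pairs_general n a b hX
end

section
/- For every n ≥ 2 and natural numbers a ≥ 1, b ≥ a+1 with (a,b) ≠ (1,b), i.e., a ≥ 2, the quantity Q(a,b) = (n^{a+b} − 2n^b − n^a + n^{b−a} + 1)/(n^{a+b} − n) satisfies Q(a,b) ≥ Q(a,a+1) = 1 − (2n+1)/(n^{a+1} + n). -/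
/-!
Write `x = n`. Splitting off the limit `(1 - x⁻ᵃ)²` of `Q(a, b)` as `b → ∞` leaves
`R(a) / (x^(a+b) - x)`, where `R(a) = x (1 - x⁻ᵃ)² - x^a + 1 = (1 - x⁻ᵃ)(x - x^(1-a) - x^a)` is
negative and independent of `b`; as the denominator grows with `b`, so does `Q(a, b)`. At `b = a + 1`
numerator and denominator share the factor `x^a - 1`, which gives the closed form.
-/

noncomputable def Q (x : ℝ) (a b : ℕ) : ℝ :=
  (x ^ (a + b) - 2 * x ^ b - x ^ a + x ^ (b - a) + 1) / (x ^ (a + b) - x)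

noncomputable def Q.remainder (x : ℝ) (a : ℕ) : ℝ :=
  x * (1 - (x ^ a)⁻¹) ^ 2 - x ^ a + 1

lemma Q_eq_sq_add_remainder_div {x : ℝ} {a b : ℕ} (hx : x ≠ 0) (hab : a ≤ b)
    (hden : x ^ (a + b) - x ≠ 0) :
    Q x a b = (1 - (x ^ a)⁻¹) ^ 2 + Q.remainder x a / (x ^ (a + b) - x) := by
  obtain ⟨c, rfl⟩ := Nat.exists_eq_add_of_le hab
  have hxa : x ^ a ≠ 0 := pow_ne_zero a hx
  rw [Q, Q.remainder, Nat.add_sub_cancel_left]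
  field_simp
  ring

lemma Q.remainder_neg {x : ℝ} {a : ℕ} (hx : 1 < x) (ha : 1 ≤ a) : Q.remainder x a < 0 := by
  have hxa : x ≤ x ^ a := le_self_pow₀ hx.le (by omega)
  have hinv_pos : 0 < (x ^ a)⁻¹ := by positivity
  have hinv_lt : (x ^ a)⁻¹ < 1 := inv_lt_one_of_one_lt₀ (one_lt_pow₀ hx (by omega))
  have hfactor : Q.remainder x a = (1 - (x ^ a)⁻¹) * (x - x * (x ^ a)⁻¹ - x ^ a) := by
    rw [Q.remainder]
    field_simp
    ring
  rw [hfactor]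
  exact mul_neg_of_pos_of_neg (by linarith) (by nlinarith)

lemma Q_le_Q_of_le {x : ℝ} {a b b' : ℕ} (hx : 1 < x) (ha : 1 ≤ a) (hab : a ≤ b) (hbb' : b ≤ b') :
    Q x a b ≤ Q x a b' := by
  have hden_pos : ∀ m, 2 ≤ m → 0 < x ^ m - x := fun m hm => by
    have := pow_lt_pow_right₀ hx (show 1 < m by omega)
    rw [pow_one] at this
    linarith
  have hden : 0 < x ^ (a + b) - x := hden_pos _ (by omega)
  have hden' : 0 < x ^ (a + b') - x := hden_pos _ (by omega)
  have hden_le : x ^ (a + b) - x ≤ x ^ (a + b') - x :=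
    sub_le_sub_right (pow_le_pow_right₀ hx.le (by omega)) x
  have hx0 : x ≠ 0 := by positivity
  rw [Q_eq_sq_add_remainder_div hx0 hab hden.ne', Q_eq_sq_add_remainder_div hx0 (hab.trans hbb') hden'.ne']
  gcongr (1 - (x ^ a)⁻¹) ^ 2 + ?_
  rw [div_le_div_iff₀ hden hden']
  exact mul_le_mul_of_nonpos_left hden_le (Q.remainder_neg hx ha).le

lemma Q_self_succ {x : ℝ} {a : ℕ} (hx : 1 < x) (ha : 1 ≤ a) :
    Q x a (a + 1) = 1 - (2 * x + 1) / (x ^ (a + 1) + x) := by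
  have hxa : x ^ a - 1 ≠ 0 := (sub_pos.2 (one_lt_pow₀ hx (by omega))).ne'
  have hx0 : 0 < x := by linarith
  have hden : x ^ (a + 1) + x ≠ 0 := by positivity
  have hnum : x ^ (a + (a + 1)) - 2 * x ^ (a + 1) - x ^ a + x ^ (a + 1 - a) + 1
      = (x ^ a - 1) * (x ^ (a + 1) + x - (2 * x + 1)) := by
    rw [Nat.add_sub_cancel_left]
    ring
  have hden' : x ^ (a + (a + 1)) - x = (x ^ a - 1) * (x ^ (a + 1) + x) := by ring
  rw [Q, hnum, hden', mul_div_mul_left _ _ hxa, sub_div, div_self hden]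

theorem Q_monotone (n a b : ℕ) (hn : 2 ≤ n) (ha : 2 ≤ a) (hb : a + 1 ≤ b) :
    ((n : ℝ) ^ (a + b) - 2 * n ^ b - n ^ a + n ^ (b - a) + 1) / (n ^ (a + b) - n) ≥
      ((n : ℝ) ^ (a + (a + 1)) - 2 * n ^ (a + 1) - n ^ a + n ^ (a + 1 - a) + 1) /
        (n ^ (a + (a + 1)) - n) ∧
    ((n : ℝ) ^ (a + (a + 1)) - 2 * n ^ (a + 1) - n ^ a + n ^ (a + 1 - a) + 1) /
        (n ^ (a + (a + 1)) - n) =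
      1 - (2 * n + 1) / ((n : ℝ) ^ (a + 1) + n) := by
  have hx : (1 : ℝ) < n := by exact_mod_cast hn
  have ha1 : 1 ≤ a := by omega
  exact ⟨Q_le_Q_of_le hx ha1 (by omega) hb, Q_self_succ hx ha1⟩
end
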